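/- arXiv:1803.09137 — 5 statements merged into one kernel-verified Lean document; each statement's English description precedes it below -/
import Mathlib

section
/- Let a,b>0 and λ,μ,ν ∈ ℝ satisfy (|λ|+|μ|+|ν|)(a+b+ab) < 1. Then for any continuous g:[0,a]×[0,b]→ℝ, the integral equation φ(X,Y) + λ∫₀^X φ(x,Y)dx + μ∫₀^Y φ(X,y)dy + ν∫₀^X∫₀^Y φ(x,y)dxdy = g(X,Y) has a unique continuous solution φ on [0,a]×[0,b]. -/
/-!
Pull every function on the rectangle `R = [0,a] × [0,b]` back to `ℝ²` along the nearest-point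
retraction `ℝ² → R`. Solutions on `R` then correspond to fixed points of `f ↦ g̃ - T f` on the
Banach space of bounded continuous functions on `ℝ²`, where `g̃` is the pulled-back right-hand
side and `T f` is the integral operator evaluated at the retracted point. The three integrals range over subsets of `R` of measure at
most `a`, `b` and `ab`, so `‖T‖ ≤ |λ|a + |μ|b + |ν|ab ≤ (|λ| + |μ| + |ν|)(a + b + ab) < 1`, and
Banach's fixed point theorem gives existence and uniqueness.
-/

open MeasureTheory intervalIntegral
open Set Function
open scoped BoundedContinuousFunction

section Rectangle

variable {a b : ℝ}

noncomputable def clampRect (a b : ℝ) (p : ℝ × ℝ) : ℝ × ℝ :=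
  (max 0 (min p.1 a), max 0 (min p.2 b))

theorem continuous_clampRect : Continuous (clampRect a b) := by
  unfold clampRect; fun_prop

theorem clampRect_mem (ha : 0 ≤ a) (hb : 0 ≤ b) (p : ℝ × ℝ) :
    clampRect a b p ∈ Icc 0 a ×ˢ Icc 0 b :=
  ⟨⟨le_max_left _ _, max_le ha (min_le_right _ _)⟩,
    ⟨le_max_left _ _, max_le hb (min_le_right _ _)⟩⟩

theorem clampRect_of_mem {p : ℝ × ℝ} (hp : p ∈ Icc 0 a ×ˢ Icc 0 b) : clampRect a b p = p := by
  obtain ⟨⟨hx₀, hx⟩, ⟨hy₀, hy⟩⟩ := hp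
  simp only [clampRect, min_eq_left hx, min_eq_left hy, max_eq_right hx₀, max_eq_right hy₀]

theorem exists_boundedContinuousFunction_eq_comp_clampRect (ha : 0 ≤ a) (hb : 0 ≤ b)
    {f : ℝ × ℝ → ℝ} (hf : ContinuousOn f (Icc 0 a ×ˢ Icc 0 b)) :
    ∃ F : ℝ × ℝ →ᵇ ℝ, ∀ p, F p = f (clampRect a b p) := by
  obtain ⟨C, hC⟩ := (isCompact_Icc.prod isCompact_Icc).exists_bound_of_continuousOn hf
  exact ⟨.ofNormedAddCommGroup _ (hf.comp_continuous continuous_clampRect (clampRect_mem ha hb))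
    C fun p => hC _ (clampRect_mem ha hb p), fun _ => rfl⟩

end Rectangle

theorem abs_intervalIntegral_le_of_mem_Icc {h : ℝ → ℝ} {u c M : ℝ} (hu : u ∈ Icc 0 c)
    (hh : ∀ x ∈ Icc 0 u, |h x| ≤ M) : |∫ x in (0:ℝ)..u, h x| ≤ M * c := by
  have hM : 0 ≤ M := (abs_nonneg _).trans (hh 0 ⟨le_rfl, hu.1⟩)
  have hint : ‖∫ x in (0:ℝ)..u, h x‖ ≤ M * |u - 0| :=
    intervalIntegral.norm_integral_le_of_norm_le_const fun x hx => by
      rw [uIoc_of_le hu.1] at hx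
      exact hh x ⟨hx.1.le, hx.2⟩
  rw [Real.norm_eq_abs, sub_zero, abs_of_nonneg hu.1] at hint
  exact hint.trans (mul_le_mul_of_nonneg_left hu.2 hM)

section TelegraphIntegral

variable {a b : ℝ} (lam mu nu : ℝ)

noncomputable def telegraphIntegral (f : ℝ × ℝ → ℝ) (p : ℝ × ℝ) : ℝ :=
  lam * (∫ x in (0:ℝ)..p.1, f (x, p.2)) + mu * (∫ y in (0:ℝ)..p.2, f (p.1, y))
    + nu * ∫ x in (0:ℝ)..p.1, ∫ y in (0:ℝ)..p.2, f (x, y)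

theorem add_telegraphIntegral_uncurry (φ : ℝ → ℝ → ℝ) (X Y : ℝ) :
    uncurry φ (X, Y) + telegraphIntegral lam mu nu (uncurry φ) (X, Y)
      = φ X Y + lam * (∫ x in (0:ℝ)..X, φ x Y) + mu * (∫ y in (0:ℝ)..Y, φ X y)
        + nu * (∫ x in (0:ℝ)..X, ∫ y in (0:ℝ)..Y, φ x y) := by
  simp only [telegraphIntegral, uncurry_apply_pair]; ring

variable {lam mu nu}

theorem continuous_telegraphIntegral {f : ℝ × ℝ → ℝ} (hf : Continuous f) :
    Continuous (telegraphIntegral lam mu nu f) := by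
  unfold telegraphIntegral; fun_prop

theorem continuous_intervalIntegral_snd {f : ℝ × ℝ → ℝ} (hf : Continuous f) (c : ℝ) :
    Continuous fun x => ∫ y in (0:ℝ)..c, f (x, y) :=
  intervalIntegral.continuous_parametric_intervalIntegral_of_continuous'
    (f := fun x y => f (x, y)) hf 0 c

theorem telegraphIntegral_sub {f f' : ℝ × ℝ → ℝ} (hf : Continuous f) (hf' : Continuous f')
    (p : ℝ × ℝ) :
    telegraphIntegral lam mu nu (f - f') p
      = telegraphIntegral lam mu nu f p - telegraphIntegral lam mu nu f' p := by
  simp (disch := first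
      | exact (continuous_intervalIntegral_snd hf _).intervalIntegrable _ _
      | exact (continuous_intervalIntegral_snd hf' _).intervalIntegrable _ _
      | exact Continuous.intervalIntegrable (by fun_prop) _ _) only
    [telegraphIntegral, Pi.sub_apply, intervalIntegral.integral_sub]
  ring

theorem telegraphIntegral_congr {f f' : ℝ × ℝ → ℝ} (h : EqOn f f' (Icc 0 a ×ˢ Icc 0 b))
    {p : ℝ × ℝ} (hp : p ∈ Icc 0 a ×ˢ Icc 0 b) :
    telegraphIntegral lam mu nu f p = telegraphIntegral lam mu nu f' p := by
  obtain ⟨hX, hY⟩ := hp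
  have hx : uIcc 0 p.1 ⊆ Icc 0 a := by rw [uIcc_of_le hX.1]; exact Icc_subset_Icc_right hX.2
  have hy : uIcc 0 p.2 ⊆ Icc 0 b := by rw [uIcc_of_le hY.1]; exact Icc_subset_Icc_right hY.2
  have h₁ : EqOn (fun x => f (x, p.2)) (fun x => f' (x, p.2)) (uIcc 0 p.1) :=
    fun x hx' => h ⟨hx hx', hY⟩
  have h₂ : EqOn (fun y => f (p.1, y)) (fun y => f' (p.1, y)) (uIcc 0 p.2) :=
    fun y hy' => h ⟨hX, hy hy'⟩
  have h₃ : EqOn (fun x => ∫ y in (0:ℝ)..p.2, f (x, y)) (fun x => ∫ y in (0:ℝ)..p.2, f' (x, y))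
      (uIcc 0 p.1) :=
    fun x hx' => intervalIntegral.integral_congr fun y hy' => h ⟨hx hx', hy hy'⟩
  unfold telegraphIntegral
  rw [intervalIntegral.integral_congr h₁, intervalIntegral.integral_congr h₂,
    intervalIntegral.integral_congr h₃]

theorem abs_telegraphIntegral_le {f : ℝ × ℝ → ℝ} {M : ℝ}
    (hf : ∀ q ∈ Icc 0 a ×ˢ Icc 0 b, |f q| ≤ M) {p : ℝ × ℝ} (hp : p ∈ Icc 0 a ×ˢ Icc 0 b) :
    |telegraphIntegral lam mu nu f p| ≤ (|lam| * a + |mu| * b + |nu| * (a * b)) * M := by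
  obtain ⟨hX, hY⟩ := hp
  have hx : ∀ x ∈ Icc 0 p.1, x ∈ Icc 0 a := fun x hx => ⟨hx.1, hx.2.trans hX.2⟩
  have hy : ∀ y ∈ Icc 0 p.2, y ∈ Icc 0 b := fun y hy => ⟨hy.1, hy.2.trans hY.2⟩
  have h₁ := abs_intervalIntegral_le_of_mem_Icc hX fun x hx' => hf (x, p.2) ⟨hx x hx', hY⟩
  have h₂ := abs_intervalIntegral_le_of_mem_Icc hY fun y hy' => hf (p.1, y) ⟨hX, hy y hy'⟩
  have h₃ := abs_intervalIntegral_le_of_mem_Icc hX fun x hx' =>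
    abs_intervalIntegral_le_of_mem_Icc hY fun y hy' => hf (x, y) ⟨hx x hx', hy y hy'⟩
  have h := abs_add_three (lam * ∫ x in (0:ℝ)..p.1, f (x, p.2))
    (mu * ∫ y in (0:ℝ)..p.2, f (p.1, y)) (nu * ∫ x in (0:ℝ)..p.1, ∫ y in (0:ℝ)..p.2, f (x, y))
  rw [abs_mul, abs_mul, abs_mul] at h
  unfold telegraphIntegral
  linarith [mul_le_mul_of_nonneg_left h₁ (abs_nonneg lam),
    mul_le_mul_of_nonneg_left h₂ (abs_nonneg mu), mul_le_mul_of_nonneg_left h₃ (abs_nonneg nu)]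

end TelegraphIntegral

section TelegraphOperator

variable {a b lam mu nu : ℝ} (ha : 0 ≤ a) (hb : 0 ≤ b)

noncomputable def telegraphOp (lam mu nu : ℝ) (f : ℝ × ℝ →ᵇ ℝ) : ℝ × ℝ →ᵇ ℝ :=
  .ofNormedAddCommGroup (fun p => telegraphIntegral lam mu nu f (clampRect a b p))
    ((continuous_telegraphIntegral f.continuous).comp continuous_clampRect)
    ((|lam| * a + |mu| * b + |nu| * (a * b)) * ‖f‖)
    fun p => abs_telegraphIntegral_le (fun q _ => f.norm_coe_le_norm q) (clampRect_mem ha hb p)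

theorem telegraphOp_apply (f : ℝ × ℝ →ᵇ ℝ) (p : ℝ × ℝ) :
    telegraphOp ha hb lam mu nu f p = telegraphIntegral lam mu nu f (clampRect a b p) :=
  rfl

theorem norm_telegraphOp_le (f : ℝ × ℝ →ᵇ ℝ) :
    ‖telegraphOp ha hb lam mu nu f‖ ≤ (|lam| * a + |mu| * b + |nu| * (a * b)) * ‖f‖ :=
  BoundedContinuousFunction.norm_ofNormedAddCommGroup_le _ (by positivity) _

theorem telegraphOp_sub (f f' : ℝ × ℝ →ᵇ ℝ) :
    telegraphOp ha hb lam mu nu (f - f')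
      = telegraphOp ha hb lam mu nu f - telegraphOp ha hb lam mu nu f' := by
  ext p
  exact telegraphIntegral_sub f.continuous f'.continuous _

theorem contractingWith_sub_telegraphOp (hL : |lam| * a + |mu| * b + |nu| * (a * b) < 1)
    (G : ℝ × ℝ →ᵇ ℝ) :
    ContractingWith (|lam| * a + |mu| * b + |nu| * (a * b)).toNNReal
      fun f => G - telegraphOp ha hb lam mu nu f := by
  refine ⟨Real.toNNReal_lt_one.mpr hL, LipschitzWith.of_dist_le_mul fun f f' => ?_⟩
  rw [Real.coe_toNNReal _ (by positivity), dist_sub_left, dist_eq_norm, dist_eq_norm,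
    ← telegraphOp_sub]
  exact norm_telegraphOp_le ha hb _

theorem add_telegraphIntegral_eq_of_isFixedPt {G f : ℝ × ℝ →ᵇ ℝ}
    (hf : IsFixedPt (fun f => G - telegraphOp ha hb lam mu nu f) f) {p : ℝ × ℝ}
    (hp : p ∈ Icc 0 a ×ˢ Icc 0 b) :
    f p + telegraphIntegral lam mu nu f p = G p := by
  have h := DFunLike.congr_fun hf p
  rw [BoundedContinuousFunction.sub_apply, telegraphOp_apply, clampRect_of_mem hp] at h
  linarith

theorem isFixedPt_of_add_telegraphIntegral_eq {G F : ℝ × ℝ →ᵇ ℝ} {g f : ℝ × ℝ → ℝ}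
    (hG : ∀ p, G p = g (clampRect a b p)) (hF : ∀ p, F p = f (clampRect a b p))
    (hf : ∀ q ∈ Icc 0 a ×ˢ Icc 0 b, f q + telegraphIntegral lam mu nu f q = g q) :
    IsFixedPt (fun f => G - telegraphOp ha hb lam mu nu f) F := by
  have hFf : EqOn F f (Icc 0 a ×ˢ Icc 0 b) := fun q hq => by rw [hF, clampRect_of_mem hq]
  ext p
  have hq := clampRect_mem ha hb p
  rw [BoundedContinuousFunction.sub_apply, telegraphOp_apply, hG, hF,
    telegraphIntegral_congr hFf hq, ← hf _ hq]
  ring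

end TelegraphOperator

/-- Existence and uniqueness of continuous solutions to the integrated telegraph
equation on `[0,a] × [0,b]` under the contraction condition. -/
theorem stmt_0 (a b lam mu nu : ℝ) (ha : 0 < a) (hb : 0 < b)
    (hsmall : (|lam| + |mu| + |nu|) * (a + b + a * b) < 1)
    (g : ℝ → ℝ → ℝ)
    (hg : ContinuousOn (fun p : ℝ × ℝ => g p.1 p.2) (Set.Icc 0 a ×ˢ Set.Icc 0 b)) :
    ∃ φ : ℝ → ℝ → ℝ,
      (ContinuousOn (fun p : ℝ × ℝ => φ p.1 p.2) (Set.Icc 0 a ×ˢ Set.Icc 0 b) ∧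
        ∀ X ∈ Set.Icc (0:ℝ) a, ∀ Y ∈ Set.Icc (0:ℝ) b,
          φ X Y + lam * (∫ x in (0:ℝ)..X, φ x Y) + mu * (∫ y in (0:ℝ)..Y, φ X y)
            + nu * (∫ x in (0:ℝ)..X, ∫ y in (0:ℝ)..Y, φ x y) = g X Y) ∧
      ∀ φ' : ℝ → ℝ → ℝ,
        (ContinuousOn (fun p : ℝ × ℝ => φ' p.1 p.2) (Set.Icc 0 a ×ˢ Set.Icc 0 b) ∧
          ∀ X ∈ Set.Icc (0:ℝ) a, ∀ Y ∈ Set.Icc (0:ℝ) b,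
            φ' X Y + lam * (∫ x in (0:ℝ)..X, φ' x Y) + mu * (∫ y in (0:ℝ)..Y, φ' X y)
              + nu * (∫ x in (0:ℝ)..X, ∫ y in (0:ℝ)..Y, φ' x y) = g X Y) →
        ∀ X ∈ Set.Icc (0:ℝ) a, ∀ Y ∈ Set.Icc (0:ℝ) b, φ' X Y = φ X Y := by
  have hL : |lam| * a + |mu| * b + |nu| * (a * b) < 1 := by
    have := abs_nonneg lam; have := abs_nonneg mu; have := abs_nonneg nu
    nlinarith [mul_pos ha hb]
  obtain ⟨G, hG⟩ := exists_boundedContinuousFunction_eq_comp_clampRect ha.le hb.le hg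
  have hΘ := contractingWith_sub_telegraphOp ha.le hb.le hL G
  set f₀ := ContractingWith.fixedPoint _ hΘ
  refine ⟨fun X Y => f₀ (X, Y), ⟨f₀.continuous.continuousOn, fun X hX Y hY => ?_⟩, ?_⟩
  · have h := add_telegraphIntegral_eq_of_isFixedPt ha.le hb.le hΘ.fixedPoint_isFixedPt
      (p := (X, Y)) ⟨hX, hY⟩
    rw [hG, clampRect_of_mem ⟨hX, hY⟩] at h
    exact (add_telegraphIntegral_uncurry lam mu nu (fun X Y => f₀ (X, Y)) X Y).symm.trans h
  · rintro φ ⟨hφ, hφg⟩ X hX Y hY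
    obtain ⟨F, hF⟩ := exists_boundedContinuousFunction_eq_comp_clampRect ha.le hb.le hφ
    have hFix := isFixedPt_of_add_telegraphIntegral_eq ha.le hb.le (g := uncurry g)
      (f := uncurry φ) hG hF fun q hq => by
        rw [add_telegraphIntegral_uncurry]; exact hφg q.1 hq.1 q.2 hq.2
    have := DFunLike.congr_fun (hΘ.fixedPoint_unique hFix) (X, Y)
    rwa [hF, clampRect_of_mem ⟨hX, hY⟩] at this
end

section
/- Define the Riemann function R(X,Y;x,y) = (1/2πi)∮_{−β₁} (β₂−β₁)/((z+β₁)(z+β₂)) · exp[(β₁−β₂)(−(X−x)·z/(z+β₂) + (Y−y)·z/(z+β₁))] dz, where the contour positively encircles −β₁ but not −β₂. Then R satisfies: (1) R_{XY} + β₁R_Y + β₂R_X = 0; (2) (R_X + β₁R)|_{Y=y} = 0 and (R_x − β₁R)|_{Y=y} = 0; (3) (R_Y + β₂R)|_{X=x} = 0 and (R_y − β₂R)|_{X=x} = 0; (4) R(X,Y;X,Y) = 1. -/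
open Complex

/-- The Riemann function of the telegraph operator, defined as a contour integral over a
positively oriented circle around `-β₁` (of radius `|β₁-β₂|/2`, so that `-β₂` is outside). -/
noncomputable def RiemannF (b1 b2 : ℝ) (X Y x y : ℝ) : ℂ :=
  (2 * Real.pi * Complex.I)⁻¹ *
    ∮ z in C((-b1 : ℂ), |b1 - b2| / 2),
      ((b2 : ℂ) - (b1 : ℂ)) / ((z + (b1 : ℂ)) * (z + (b2 : ℂ))) *
        Complex.exp (((b1 : ℂ) - (b2 : ℂ)) *
          (-((X : ℂ) - (x : ℂ)) * z / (z + (b2 : ℂ)) + ((Y : ℂ) - (y : ℂ)) * z / (z + (b1 : ℂ))))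

/-!
Write `s = X - x`, `t = Y - y`, `A z = (β₂ - β₁) z / (z + β₂)` and `B z = (β₁ - β₂) z / (z + β₁)`.
The integrand of `R` is `w z · exp (A z · s + B z · t)`, with `w`, `A`, `B` continuous on the
contour, so `∂_s` and `∂_t` pass under the integral as multiplication by `A` and `B`. The
equation (1) is then the identity `(A + β₁)(B + β₂) = β₁β₂`. On `Y = y` the factor `exp (A s)`
is holomorphic in the closed disc and `w` has a simple pole at `-β₁`, so Cauchy's formula gives
`R = exp (-β₁ (X - x))`, whence (2) and (4). On `X = x` one has `(B + β₂) w = -B'`, so the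
integrand of `R_Y + β₂ R` is the exact derivative `-(d/dz) exp (t B) / t` (`-B'` if `t = 0`)
and its integral over the closed contour vanishes, which gives (3).
-/

open Real Metric

theorem hasDerivAt_intervalIntegral_of_continuous {E : Type*} [NormedAddCommGroup E]
    [NormedSpace ℝ E] {F F' : ℝ → ℝ → E} {a b : ℝ}
    (hF : Continuous fun p : ℝ × ℝ => F p.1 p.2) (hF' : Continuous fun p : ℝ × ℝ => F' p.1 p.2)
    (hderiv : ∀ u θ, HasDerivAt (fun u => F u θ) (F' u θ) u) (u₀ : ℝ) :
    HasDerivAt (fun u => ∫ θ in a..b, F u θ) (∫ θ in a..b, F' u₀ θ) u₀ := by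
  obtain ⟨C, hC⟩ := ((isCompact_closedBall u₀ 1).prod isCompact_uIcc).exists_bound_of_continuousOn
    hF'.continuousOn
  have hFu (u : ℝ) : Continuous (F u) := hF.comp (Continuous.prodMk_right u)
  refine (intervalIntegral.hasDerivAt_integral_of_dominated_loc_of_deriv_le (bound := fun _ => C)
    (ball_mem_nhds u₀ one_pos) (.of_forall fun u => (hFu u).aestronglyMeasurable)
    ((hFu u₀).intervalIntegrable _ _)
    (hF'.comp (Continuous.prodMk_right u₀)).aestronglyMeasurable ?_ intervalIntegrable_const
    (.of_forall fun θ _ u _ => hderiv u θ)).2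
  exact .of_forall fun θ hθ u hu =>
    hC (u, θ) ⟨ball_subset_closedBall hu, Set.uIoc_subset_uIcc hθ⟩

theorem hasDerivAt_intervalIntegral_mul_cexp {w α β : ℝ → ℂ} {a b : ℝ} (hw : Continuous w)
    (hα : Continuous α) (hβ : Continuous β) (u₀ : ℝ) :
    HasDerivAt (fun u : ℝ => ∫ θ in a..b, w θ * cexp (α θ * u + β θ))
      (∫ θ in a..b, α θ * w θ * cexp (α θ * u₀ + β θ)) u₀ := by
  refine hasDerivAt_intervalIntegral_of_continuous
    (F := fun (u : ℝ) θ => w θ * cexp (α θ * u + β θ))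
    (F' := fun (u : ℝ) θ => α θ * w θ * cexp (α θ * u + β θ))
    (by fun_prop) (by fun_prop) (fun u θ => ?_) u₀
  have hexp := (((hasDerivAt_id (u : ℂ)).const_mul (α θ)).add_const (β θ)).cexp.comp_ofReal
  exact (hexp.const_mul (w θ)).congr_deriv (by simp only [id, mul_one]; ring)

theorem hasDerivAt_circleIntegral_mul_cexp {c : ℂ} {R : ℝ} (hR : 0 ≤ R) {f α β : ℂ → ℂ}
    (hf : ContinuousOn f (sphere c R)) (hα : ContinuousOn α (sphere c R))
    (hβ : ContinuousOn β (sphere c R)) (u₀ : ℝ) :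
    HasDerivAt (fun u : ℝ => ∮ z in C(c, R), f z * cexp (α z * u + β z))
      (∮ z in C(c, R), α z * f z * cexp (α z * u₀ + β z)) u₀ := by
  have onCircle {g : ℂ → ℂ} (hg : ContinuousOn g (sphere c R)) :
      Continuous fun θ => g (circleMap c R θ) :=
    hg.comp_continuous (continuous_circleMap c R) (circleMap_mem_sphere c hR)
  have hw : Continuous fun θ => circleMap 0 R θ * I * f (circleMap c R θ) :=
    ((continuous_circleMap 0 R).mul continuous_const).mul (onCircle hf)
  convert hasDerivAt_intervalIntegral_mul_cexp (a := 0) (b := 2 * π) hw (onCircle hα) (onCircle hβ)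
    u₀ using 1
  · simp only [circleIntegral, deriv_circleMap, smul_eq_mul, mul_assoc]
  · simp only [circleIntegral, deriv_circleMap, smul_eq_mul]
    congr 1 with θ
    ring

theorem circleIntegral_mul_cexp_eq_zero {c : ℂ} {R : ℝ} (hR : 0 ≤ R) {g g' : ℂ → ℂ}
    (hg : ∀ z ∈ sphere c R, HasDerivAt g (g' z) z) (t : ℂ) :
    ∮ z in C(c, R), g' z * cexp (g z * t) = 0 := by
  rcases eq_or_ne t 0 with rfl | ht
  · simpa using circleIntegral.integral_eq_zero_of_hasDerivWithinAt hR
      fun z hz => (hg z hz).hasDerivWithinAt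
  · refine circleIntegral.integral_eq_zero_of_hasDerivWithinAt (f := fun z => cexp (g z * t) / t)
      hR fun z hz => ?_
    have := (((hg z hz).mul_const t).cexp.div_const t).hasDerivWithinAt (s := sphere c R)
    convert this using 1
    field_simp

namespace RiemannF

noncomputable def exponentX (b1 b2 : ℝ) (z : ℂ) : ℂ := (b2 - b1) * z / (z + b2)

noncomputable def exponentY (b1 b2 : ℝ) (z : ℂ) : ℂ := (b1 - b2) * z / (z + b1)

noncomputable def amplitude (b1 b2 : ℝ) (z : ℂ) : ℂ := (b2 - b1) / ((z + b1) * (z + b2))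

noncomputable def contourIntegral (b1 b2 : ℝ) (f : ℂ → ℂ) (s t : ℝ) : ℂ :=
  ∮ z in C((-b1 : ℂ), |b1 - b2| / 2), f z * cexp (exponentX b1 b2 z * s + exponentY b1 b2 z * t)

theorem eq_contourIntegral (b1 b2 X Y x y : ℝ) :
    RiemannF b1 b2 X Y x y
      = (2 * π * I)⁻¹ * contourIntegral b1 b2 (amplitude b1 b2) (X - x) (Y - y) := by
  unfold RiemannF contourIntegral
  congr 2 with z
  unfold exponentX exponentY amplitude
  push_cast
  congr 2
  ring

variable {b1 b2 : ℝ}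

theorem add_b1_ne_zero (hne : b1 ≠ b2) {z : ℂ} (hz : z ∈ sphere (-b1 : ℂ) (|b1 - b2| / 2)) :
    z + b1 ≠ 0 := by
  rw [mem_sphere_iff_norm, sub_neg_eq_add] at hz
  rw [← norm_ne_zero_iff, hz]
  have := sub_ne_zero.mpr hne
  positivity

theorem add_b2_ne_zero (hne : b1 ≠ b2) {z : ℂ} (hz : z ∈ closedBall (-b1 : ℂ) (|b1 - b2| / 2)) :
    z + b2 ≠ 0 := by
  rintro hz2
  rw [mem_closedBall_iff_norm, sub_neg_eq_add, show z + b1 = ((b1 - b2 : ℝ) : ℂ) by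
    push_cast; linear_combination hz2, norm_real, Real.norm_eq_abs] at hz
  have := abs_pos.mpr (sub_ne_zero.mpr hne)
  linarith

theorem continuousOn_exponentX (hne : b1 ≠ b2) :
    ContinuousOn (exponentX b1 b2) (sphere (-b1 : ℂ) (|b1 - b2| / 2)) :=
  (continuousOn_const.mul continuousOn_id).div (continuousOn_id.add continuousOn_const)
    fun _ hz => add_b2_ne_zero hne (sphere_subset_closedBall hz)

theorem continuousOn_exponentY (hne : b1 ≠ b2) :
    ContinuousOn (exponentY b1 b2) (sphere (-b1 : ℂ) (|b1 - b2| / 2)) :=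
  (continuousOn_const.mul continuousOn_id).div (continuousOn_id.add continuousOn_const)
    fun _ hz => add_b1_ne_zero hne hz

theorem continuousOn_amplitude (hne : b1 ≠ b2) :
    ContinuousOn (amplitude b1 b2) (sphere (-b1 : ℂ) (|b1 - b2| / 2)) :=
  continuousOn_const.div ((continuousOn_id.add continuousOn_const).mul
    (continuousOn_id.add continuousOn_const))
    fun _ hz =>
      mul_ne_zero (add_b1_ne_zero hne hz) (add_b2_ne_zero hne (sphere_subset_closedBall hz))

theorem hasDerivAt_contourIntegral_fst (hne : b1 ≠ b2) {f : ℂ → ℂ}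
    (hf : ContinuousOn f (sphere (-b1 : ℂ) (|b1 - b2| / 2))) (s t : ℝ) :
    HasDerivAt (fun s => contourIntegral b1 b2 f s t)
      (contourIntegral b1 b2 (fun z => exponentX b1 b2 z * f z) s t) s :=
  hasDerivAt_circleIntegral_mul_cexp (by positivity) hf (continuousOn_exponentX hne)
    ((continuousOn_exponentY hne).mul continuousOn_const) s

theorem hasDerivAt_contourIntegral_snd (hne : b1 ≠ b2) {f : ℂ → ℂ}
    (hf : ContinuousOn f (sphere (-b1 : ℂ) (|b1 - b2| / 2))) (s t : ℝ) :
    HasDerivAt (fun t => contourIntegral b1 b2 f s t)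
      (contourIntegral b1 b2 (fun z => exponentY b1 b2 z * f z) s t) t := by
  simp only [contourIntegral, add_comm (exponentX b1 b2 _ * _)]
  exact hasDerivAt_circleIntegral_mul_cexp (by positivity) hf (continuousOn_exponentY hne)
    ((continuousOn_exponentX hne).mul continuousOn_const) t

theorem contourIntegral_add_const_mul (hne : b1 ≠ b2) {f g : ℂ → ℂ}
    (hf : ContinuousOn f (sphere (-b1 : ℂ) (|b1 - b2| / 2)))
    (hg : ContinuousOn g (sphere (-b1 : ℂ) (|b1 - b2| / 2))) (a : ℂ) (s t : ℝ) :
    contourIntegral b1 b2 f s t + a * contourIntegral b1 b2 g s t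
      = contourIntegral b1 b2 (fun z => f z + a * g z) s t := by
  have hexp : ContinuousOn (fun z => cexp (exponentX b1 b2 z * s + exponentY b1 b2 z * t))
      (sphere (-b1 : ℂ) (|b1 - b2| / 2)) :=
    (((continuousOn_exponentX hne).mul continuousOn_const).add
      ((continuousOn_exponentY hne).mul continuousOn_const)).cexp
  unfold contourIntegral
  rw [← circleIntegral.integral_const_mul, ← circleIntegral.integral_add
    ((hf.fun_mul hexp).circleIntegrable (by positivity))
    (((continuousOn_const.fun_mul (hg.fun_mul hexp))).circleIntegrable (by positivity))]
  simp only [add_mul, mul_assoc]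

theorem exponentX_mul_exponentY_add {z : ℂ} (hz1 : z + b1 ≠ 0) (hz2 : z + b2 ≠ 0) :
    exponentX b1 b2 z * exponentY b1 b2 z + b1 * exponentY b1 b2 z
      + b2 * exponentX b1 b2 z = 0 := by
  unfold exponentX exponentY
  field_simp
  ring

theorem contourIntegral_telegraph (hne : b1 ≠ b2) {f : ℂ → ℂ}
    (hf : ContinuousOn f (sphere (-b1 : ℂ) (|b1 - b2| / 2))) (s t : ℝ) :
    contourIntegral b1 b2 (fun z => exponentX b1 b2 z * (exponentY b1 b2 z * f z)) s t
      + b1 * contourIntegral b1 b2 (fun z => exponentY b1 b2 z * f z) s t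
      + b2 * contourIntegral b1 b2 (fun z => exponentX b1 b2 z * f z) s t = 0 := by
  have hX := continuousOn_exponentX hne
  have hY := continuousOn_exponentY hne
  rw [contourIntegral_add_const_mul hne (by fun_prop) (by fun_prop),
    contourIntegral_add_const_mul hne (by fun_prop) (by fun_prop)]
  calc _ = ∮ z in C((-b1 : ℂ), |b1 - b2| / 2), (0 : ℂ) :=
        circleIntegral.integral_congr (by positivity) fun z hz => ?_
    _ = 0 := by simp [circleIntegral]
  linear_combination f z * cexp (exponentX b1 b2 z * s + exponentY b1 b2 z * t) *
    exponentX_mul_exponentY_add (add_b1_ne_zero hne hz)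
      (add_b2_ne_zero hne (sphere_subset_closedBall hz))

theorem telegraph_equation (hne : b1 ≠ b2) (X Y x y : ℝ) :
    deriv (fun X' => deriv (fun Y' => RiemannF b1 b2 X' Y' x y) Y) X
      + (b1 : ℂ) * deriv (fun Y' => RiemannF b1 b2 X Y' x y) Y
      + (b2 : ℂ) * deriv (fun X' => RiemannF b1 b2 X' Y x y) X = 0 := by
  have hw := continuousOn_amplitude hne
  have hYw := (continuousOn_exponentY hne).fun_mul hw
  have derivY (X' : ℝ) : deriv (fun Y' => RiemannF b1 b2 X' Y' x y) Y
      = (2 * π * I)⁻¹ * contourIntegral b1 b2 (fun z => exponentY b1 b2 z * amplitude b1 b2 z)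
          (X' - x) (Y - y) := by
    simp only [eq_contourIntegral]
    exact (((hasDerivAt_contourIntegral_snd hne hw _ _).comp_sub_const Y y).const_mul _).deriv
  simp only [derivY]
  simp only [eq_contourIntegral]
  rw [(((hasDerivAt_contourIntegral_fst hne hYw _ _).comp_sub_const X x).const_mul _).deriv,
    (((hasDerivAt_contourIntegral_fst hne hw _ _).comp_sub_const X x).const_mul _).deriv]
  linear_combination (2 * π * I)⁻¹ * contourIntegral_telegraph hne hw (X - x) (Y - y)

theorem eq_cexp_at_Y_eq_y (hne : b1 ≠ b2) (X x y : ℝ) :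
    RiemannF b1 b2 X y x y = cexp (-b1 * (X - x : ℝ)) := by
  have hb : (b2 : ℂ) - b1 ≠ 0 := sub_ne_zero.mpr (ofReal_injective.ne hne.symm)
  set h : ℂ → ℂ := fun z => (b2 - b1) / (z + b2) * cexp (exponentX b1 b2 z * (X - x : ℝ))
  have hh : DifferentiableOn ℂ h (closedBall (-b1 : ℂ) (|b1 - b2| / 2)) := by
    have hden : ∀ z ∈ closedBall (-b1 : ℂ) (|b1 - b2| / 2), z + b2 ≠ 0 :=
      fun _ hz => add_b2_ne_zero hne hz
    unfold h exponentX
    fun_prop (disch := assumption)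
  have key := (hh.diffContOnCl_ball subset_rfl).two_pi_i_inv_smul_circleIntegral_sub_inv_smul
    (mem_ball_self (by have := sub_ne_zero.mpr hne; positivity))
  have hint : contourIntegral b1 b2 (amplitude b1 b2) (X - x) 0
      = ∮ z in C((-b1 : ℂ), |b1 - b2| / 2), (z - -b1)⁻¹ • h z := by
    unfold contourIntegral
    congr 1 with z
    simp only [h, amplitude, sub_neg_eq_add, ofReal_zero, mul_zero, add_zero, smul_eq_mul,
      div_eq_mul_inv, mul_inv]
    ring
  have hval : h (-b1) = cexp (-b1 * (X - x : ℝ)) := by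
    simp only [h, exponentX, neg_add_eq_sub, div_self hb, one_mul]
    congr 1
    field_simp
  rw [eq_contourIntegral, sub_self, hint, ← smul_eq_mul, key, hval]

theorem boundary_at_Y_eq_y (hne : b1 ≠ b2) (X x y : ℝ) :
    deriv (fun X' => RiemannF b1 b2 X' y x y) X + (b1 : ℂ) * RiemannF b1 b2 X y x y = 0 ∧
      deriv (fun x' => RiemannF b1 b2 X y x' y) x - (b1 : ℂ) * RiemannF b1 b2 X y x y = 0 := by
  have hexp (s : ℝ) : HasDerivAt (fun s : ℝ => cexp (-b1 * s)) (-b1 * cexp (-b1 * s)) s := by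
    simpa [mul_comm] using ((hasDerivAt_id (s : ℂ)).const_mul (-(b1 : ℂ))).cexp.comp_ofReal
  simp only [eq_cexp_at_Y_eq_y hne]
  rw [((hexp _).comp_sub_const X x).deriv, ((hexp _).comp_const_sub X x).deriv]
  constructor <;> ring

theorem hasDerivAt_exponentY {z : ℂ} (hz : z + b1 ≠ 0) :
    HasDerivAt (exponentY b1 b2) ((b1 - b2) * b1 / (z + b1) ^ 2) z := by
  have := ((hasDerivAt_id z).const_mul ((b1 : ℂ) - b2)).div
    ((hasDerivAt_id z).add_const (b1 : ℂ)) hz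
  exact this.congr_deriv (by simp only [id]; ring)

theorem contourIntegral_exponentY_mul_amplitude_add (hne : b1 ≠ b2) (t : ℝ) :
    contourIntegral b1 b2 (fun z => exponentY b1 b2 z * amplitude b1 b2 z) 0 t
      + b2 * contourIntegral b1 b2 (amplitude b1 b2) 0 t = 0 := by
  have hw := continuousOn_amplitude hne
  rw [contourIntegral_add_const_mul hne ((continuousOn_exponentY hne).fun_mul hw) hw]
  unfold contourIntegral
  rw [← circleIntegral_mul_cexp_eq_zero (by positivity) (g := fun z => -exponentY b1 b2 z)
    (fun z hz => (hasDerivAt_exponentY (add_b1_ne_zero hne hz)).neg) (-t)]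
  refine circleIntegral.integral_congr (by positivity) fun z hz => ?_
  have := add_b1_ne_zero hne hz
  have := add_b2_ne_zero hne (sphere_subset_closedBall hz)
  simp only [exponentY, amplitude, ofReal_zero, mul_zero, zero_add, neg_mul_neg]
  field_simp
  ring

theorem boundary_at_X_eq_x (hne : b1 ≠ b2) (Y x y : ℝ) :
    deriv (fun Y' => RiemannF b1 b2 x Y' x y) Y + (b2 : ℂ) * RiemannF b1 b2 x Y x y = 0 ∧
      deriv (fun y' => RiemannF b1 b2 x Y x y') y - (b2 : ℂ) * RiemannF b1 b2 x Y x y = 0 := by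
  have hw := continuousOn_amplitude hne
  simp only [eq_contourIntegral, sub_self]
  rw [(((hasDerivAt_contourIntegral_snd hne hw 0 _).comp_sub_const Y y).const_mul _).deriv,
    (((hasDerivAt_contourIntegral_snd hne hw 0 _).comp_const_sub Y y).const_mul _).deriv]
  constructor
  · linear_combination (2 * π * I)⁻¹ * contourIntegral_exponentY_mul_amplitude_add hne (Y - y)
  · linear_combination -(2 * π * I)⁻¹ * contourIntegral_exponentY_mul_amplitude_add hne (Y - y)

end RiemannF

open RiemannF in
theorem stmt_4_general (b1 b2 : ℝ) (hne : b1 ≠ b2) :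
    (∀ X Y x y : ℝ,
      deriv (fun X' => deriv (fun Y' => RiemannF b1 b2 X' Y' x y) Y) X
        + (b1 : ℂ) * deriv (fun Y' => RiemannF b1 b2 X Y' x y) Y
        + (b2 : ℂ) * deriv (fun X' => RiemannF b1 b2 X' Y x y) X = 0) ∧
    (∀ X x y : ℝ,
      deriv (fun X' => RiemannF b1 b2 X' y x y) X + (b1 : ℂ) * RiemannF b1 b2 X y x y = 0 ∧
      deriv (fun x' => RiemannF b1 b2 X y x' y) x - (b1 : ℂ) * RiemannF b1 b2 X y x y = 0) ∧
    (∀ Y x y : ℝ,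
      deriv (fun Y' => RiemannF b1 b2 x Y' x y) Y + (b2 : ℂ) * RiemannF b1 b2 x Y x y = 0 ∧
      deriv (fun y' => RiemannF b1 b2 x Y x y') y - (b2 : ℂ) * RiemannF b1 b2 x Y x y = 0) ∧
    (∀ X Y : ℝ, RiemannF b1 b2 X Y X Y = 1) :=
  ⟨telegraph_equation hne, boundary_at_Y_eq_y hne, boundary_at_X_eq_x hne,
    fun X Y => by simp [eq_cexp_at_Y_eq_y hne]⟩

/-- The four characteristic properties of the Riemann function for the telegraph operator
`∂_X∂_Y + β₁∂_Y + β₂∂_X`. -/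
theorem stmt_4 (b1 b2 : ℝ) (h1 : 0 < b1) (h2 : 0 < b2) (hne : b1 ≠ b2) :
    (∀ X Y x y : ℝ,
      deriv (fun X' => deriv (fun Y' => RiemannF b1 b2 X' Y' x y) Y) X
        + (b1 : ℂ) * deriv (fun Y' => RiemannF b1 b2 X Y' x y) Y
        + (b2 : ℂ) * deriv (fun X' => RiemannF b1 b2 X' Y x y) X = 0) ∧
    (∀ X x y : ℝ,
      deriv (fun X' => RiemannF b1 b2 X' y x y) X + (b1 : ℂ) * RiemannF b1 b2 X y x y = 0 ∧
      deriv (fun x' => RiemannF b1 b2 X y x' y) x - (b1 : ℂ) * RiemannF b1 b2 X y x y = 0) ∧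
    (∀ Y x y : ℝ,
      deriv (fun Y' => RiemannF b1 b2 x Y' x y) Y + (b2 : ℂ) * RiemannF b1 b2 x Y x y = 0 ∧
      deriv (fun y' => RiemannF b1 b2 x Y x y') y - (b2 : ℂ) * RiemannF b1 b2 x Y x y = 0) ∧
    (∀ X Y : ℝ, RiemannF b1 b2 X Y X Y = 1) :=
  stmt_4_general b1 b2 hne
end

section
/- Let β₁,β₂ > 0 be distinct, let u be continuous on [0,∞)², and let χ,ψ be continuously differentiable with χ(0)=ψ(0). Then the function φ(X,Y) = ψ(0)R(X,Y;0,0) + ∫₀^Y R(X,Y;0,y)(ψ'(y)+β₂ψ(y))dy + ∫₀^X R(X,Y;x,0)(χ'(x)+β₁χ(x))dx + ∫₀^X∫₀^Y R(X,Y;x,y)u(x,y)dxdy solves φ_{XY} + β₁φ_Y + β₂φ_X = u with boundary values φ(x,0)=χ(x) and φ(0,y)=ψ(y). -/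
open MeasureTheory intervalIntegral Set Metric

section Aux

/-- Swapping the order of integration over a triangle `0 ≤ t ≤ s ≤ a`. -/
lemma tri_swap (f : ℝ → ℝ → ℝ) (hf : Continuous fun p : ℝ × ℝ => f p.1 p.2)
    {a : ℝ} (ha : 0 ≤ a) :
    (∫ t in (0:ℝ)..a, ∫ s in t..a, f s t) = ∫ s in (0:ℝ)..a, ∫ t in (0:ℝ)..s, f s t := by
  set μ := volume.restrict (Set.Ioc (0:ℝ) a) with hμ
  have hfin : IsFiniteMeasure μ := by
    constructor
    rw [hμ, Measure.restrict_apply_univ]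
    exact measure_Ioc_lt_top
  set g : ℝ × ℝ → ℝ := fun p => if p.1 < p.2 then f p.2 p.1 else 0 with hg
  have hfc : Continuous fun p : ℝ × ℝ => f p.2 p.1 :=
    hf.comp (continuous_snd.prodMk continuous_fst)
  have hgm : StronglyMeasurable g := by
    have : g = Set.indicator {p : ℝ × ℝ | p.1 < p.2} (fun p => f p.2 p.1) := by
      funext p; simp [hg, Set.indicator]
    rw [this]
    exact hfc.stronglyMeasurable.indicator
      (isOpen_lt continuous_fst continuous_snd).measurableSet
  obtain ⟨C, hC⟩ := (isCompact_Icc.prod isCompact_Icc :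
      IsCompact (Set.Icc (0:ℝ) a ×ˢ Set.Icc (0:ℝ) a)).exists_bound_of_continuousOn
      hfc.continuousOn
  have haein : ∀ᵐ p ∂(μ.prod μ), p ∈ Set.Ioc (0:ℝ) a ×ˢ Set.Ioc (0:ℝ) a := by
    rw [hμ, Measure.prod_restrict]
    exact ae_restrict_mem (measurableSet_Ioc.prod measurableSet_Ioc)
  have hgint : Integrable g (μ.prod μ) := by
    refine Integrable.mono' (g := fun _ => |C|) (integrable_const _)
      hgm.aestronglyMeasurable ?_
    refine haein.mono (fun p hp => ?_)
    rw [hg]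
    by_cases h : p.1 < p.2
    · simp only [h, if_true]
      calc ‖f p.2 p.1‖ ≤ C := hC p ⟨Ioc_subset_Icc_self hp.1, Ioc_subset_Icc_self hp.2⟩
        _ ≤ |C| := le_abs_self C
    · simp only [h, if_false, norm_zero]
      exact abs_nonneg C
  have swap := integral_integral_swap (f := fun t s => g (t, s)) (μ := μ) (ν := μ) hgint
  have hL : (∫ t, (∫ s, g (t, s) ∂μ) ∂μ) = ∫ t in (0:ℝ)..a, ∫ s in t..a, f s t := by
    rw [intervalIntegral.integral_of_le ha, hμ]
    refine setIntegral_congr_fun measurableSet_Ioc (fun t ht => ?_)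
    have : (∫ s, g (t, s) ∂μ) = ∫ s in Set.Ioc (0:ℝ) a, (Set.Ioi t).indicator (fun s => f s t) s := by
      rw [hμ]
      refine setIntegral_congr_fun measurableSet_Ioc (fun s _ => ?_)
      simp [hg, Set.indicator, Set.mem_Ioi]
    rw [this, setIntegral_indicator measurableSet_Ioi]
    have hset : Set.Ioc (0:ℝ) a ∩ Set.Ioi t = Set.Ioc t a := by
      ext s
      simp only [Set.mem_inter_iff, Set.mem_Ioc, Set.mem_Ioi]
      constructor
      · rintro ⟨⟨_, h2⟩, h3⟩; exact ⟨h3, h2⟩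
      · rintro ⟨h1, h2⟩; exact ⟨⟨lt_trans ht.1 h1, h2⟩, h1⟩
    rw [hset, intervalIntegral.integral_of_le ht.2]
  have hR : (∫ s, (∫ t, g (t, s) ∂μ) ∂μ) = ∫ s in (0:ℝ)..a, ∫ t in (0:ℝ)..s, f s t := by
    rw [intervalIntegral.integral_of_le ha, hμ]
    refine setIntegral_congr_fun measurableSet_Ioc (fun s hs => ?_)
    have : (∫ t, g (t, s) ∂μ) = ∫ t in Set.Ioc (0:ℝ) a, (Set.Iio s).indicator (fun t => f s t) t := by
      rw [hμ]
      refine setIntegral_congr_fun measurableSet_Ioc (fun t _ => ?_)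
      simp [hg, Set.indicator, Set.mem_Iio]
    rw [this, setIntegral_indicator measurableSet_Iio]
    have hset : Set.Ioc (0:ℝ) a ∩ Set.Iio s = Set.Ioo 0 s := by
      ext t
      simp only [Set.mem_inter_iff, Set.mem_Ioc, Set.mem_Iio, Set.mem_Ioo]
      constructor
      · rintro ⟨⟨h1, _⟩, h3⟩; exact ⟨h1, h3⟩
      · rintro ⟨h1, h2⟩; exact ⟨⟨h1, le_trans (le_of_lt h2) hs.2⟩, h2⟩
    rw [hset, intervalIntegral.integral_of_le (le_of_lt hs.1), integral_Ioc_eq_integral_Ioo]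
  rw [← hL, ← hR, swap]

/-- Differentiation under the integral sign, fixed limits, derivative hypothesis on a ball. -/
lemma param_deriv (F F' : ℝ → ℝ → ℝ)
    (hF : Continuous fun p : ℝ × ℝ => F p.1 p.2)
    (hF' : Continuous fun p : ℝ × ℝ => F' p.1 p.2)
    {b X ε : ℝ} (hε : 0 < ε)
    (hd : ∀ a ∈ Metric.ball X ε, ∀ t, HasDerivAt (fun a' => F a' t) (F' a t) a) :
    HasDerivAt (fun a => ∫ t in (0:ℝ)..b, F a t) (∫ t in (0:ℝ)..b, F' X t) X := by
  obtain ⟨C, hC⟩ := ((isCompact_Icc.prod isCompact_uIcc) :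
      IsCompact (Set.Icc (X - ε/2) (X + ε/2) ×ˢ Set.uIcc (0:ℝ) b)).exists_bound_of_continuousOn
      hF'.continuousOn
  have cF : ∀ a : ℝ, Continuous (F a) := fun a => hF.comp (Continuous.prodMk_right a)
  have cF' : ∀ a : ℝ, Continuous (F' a) := fun a => hF'.comp (Continuous.prodMk_right a)
  have key := (intervalIntegral.hasDerivAt_integral_of_dominated_loc_of_deriv_le
    (F := F) (F' := F') (x₀ := X) (a := (0:ℝ)) (b := b) (bound := fun _ => C)
    (μ := volume) (Metric.ball_mem_nhds X (half_pos hε))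
    (Filter.Eventually.of_forall (fun a => (cF a).aestronglyMeasurable))
    ((cF X).intervalIntegrable _ _)
    ((cF' X).aestronglyMeasurable)
    ?_ (intervalIntegrable_const) ?_).2
  · exact key
  · refine Filter.Eventually.of_forall (fun t ht a hab => ?_)
    refine hC (a, t) ⟨?_, Set.uIoc_subset_uIcc ht⟩
    have := Metric.mem_ball.1 hab
    rw [Real.dist_eq] at this
    constructor <;> [linarith [abs_lt.1 this]; linarith [(abs_lt.1 this).2]]
  · refine Filter.Eventually.of_forall (fun t _ a hab => ?_)
    exact hd a (Metric.ball_subset_ball (by linarith) hab) t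

/-- Leibniz rule for `a ↦ ∫ t in 0..a, F a t` at a point `X > 0`. -/
lemma leibniz_deriv (F F' : ℝ → ℝ → ℝ)
    (hF : Continuous fun p : ℝ × ℝ => F p.1 p.2)
    (hF' : Continuous fun p : ℝ × ℝ => F' p.1 p.2)
    (hd : ∀ a t, HasDerivAt (fun a' => F a' t) (F' a t) a)
    {X : ℝ} (hX : 0 < X) :
    HasDerivAt (fun a => ∫ t in (0:ℝ)..a, F a t)
      (F X X + ∫ t in (0:ℝ)..X, F' X t) X := by
  set h : ℝ → ℝ := fun s => F s s + ∫ t in (0:ℝ)..s, F' s t with hh_def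
  have hdiag : Continuous fun s : ℝ => F s s :=
    hF.comp (continuous_id'.prodMk continuous_id')
  have hint2 : Continuous fun s : ℝ => ∫ t in (0:ℝ)..s, F' s t :=
    intervalIntegral.continuous_parametric_intervalIntegral_of_continuous
      (f := F') (by exact hF') continuous_id'
  have hh : Continuous h := hdiag.add hint2
  have key : ∀ a : ℝ, 0 ≤ a → (∫ t in (0:ℝ)..a, F a t) = ∫ s in (0:ℝ)..a, h s := by
    intro a ha
    have e1 : ∀ t, F a t = (F t t + ∫ s in t..a, F' s t) := by
      intro t
      have hsub : (∫ s in t..a, F' s t) = F a t - F t t := by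
        refine intervalIntegral.integral_eq_sub_of_hasDerivAt (fun s _ => hd s t) ?_
        exact ((hF'.comp (continuous_id'.prodMk continuous_const)).intervalIntegrable _ _)
      rw [hsub]; ring
    have ci1 : Continuous fun t : ℝ => ∫ s in (0:ℝ)..a, F' s t :=
      intervalIntegral.continuous_parametric_intervalIntegral_of_continuous'
        (f := fun t s => F' s t) (hF'.comp (continuous_snd.prodMk continuous_fst)) _ _
    have ci2 : Continuous fun t : ℝ => ∫ s in (0:ℝ)..t, F' s t :=
      intervalIntegral.continuous_parametric_intervalIntegral_of_continuous
        (f := fun t s => F' s t) (hF'.comp (continuous_snd.prodMk continuous_fst)) continuous_id'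
    have cmid : Continuous fun t : ℝ => ∫ s in t..a, F' s t := by
      have : (fun t : ℝ => ∫ s in t..a, F' s t)
          = fun t : ℝ => (∫ s in (0:ℝ)..a, F' s t) - ∫ s in (0:ℝ)..t, F' s t := by
        funext t
        have cint : ∀ u w : ℝ, IntervalIntegrable (fun s => F' s t) volume u w := fun u w =>
          (show Continuous fun s => F' s t from
            hF'.comp (continuous_id'.prodMk continuous_const)).intervalIntegrable u w
        rw [eq_sub_iff_add_eq, add_comm]
        exact intervalIntegral.integral_add_adjacent_intervals (cint 0 t) (cint t a)
      rw [this]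
      exact ci1.sub ci2
    calc (∫ t in (0:ℝ)..a, F a t)
        = ∫ t in (0:ℝ)..a, (F t t + ∫ s in t..a, F' s t) :=
          intervalIntegral.integral_congr (fun t _ => e1 t)
      _ = (∫ t in (0:ℝ)..a, F t t) + ∫ t in (0:ℝ)..a, ∫ s in t..a, F' s t :=
          intervalIntegral.integral_add (hdiag.intervalIntegrable _ _)
            (cmid.intervalIntegrable _ _)
      _ = (∫ t in (0:ℝ)..a, F t t) + ∫ s in (0:ℝ)..a, ∫ t in (0:ℝ)..s, F' s t := by
          rw [tri_swap F' hF' ha]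
      _ = ∫ s in (0:ℝ)..a, h s := by
          rw [← intervalIntegral.integral_add (hdiag.intervalIntegrable _ _)
            (hint2.intervalIntegrable _ _)]
  have heq : (fun a => ∫ t in (0:ℝ)..a, F a t) =ᶠ[nhds X] fun a => ∫ s in (0:ℝ)..a, h s :=
    Filter.eventuallyEq_of_mem (Ioi_mem_nhds hX) (fun a haa => key a (le_of_lt (Set.mem_Ioi.1 haa)))
  have hd2 : HasDerivAt (fun a => ∫ s in (0:ℝ)..a, h s) (h X) X :=
    intervalIntegral.integral_hasDerivAt_right (hh.intervalIntegrable _ _)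
      hh.aestronglyMeasurable.stronglyMeasurableAtFilter hh.continuousAt
  exact hd2.congr_of_eventuallyEq heq

lemma cont_comp4 {α : Type*} [TopologicalSpace α] {Q : ℝ → ℝ → ℝ → ℝ → ℝ}
    (hQ : Continuous fun p : ℝ × ℝ × ℝ × ℝ => Q p.1 p.2.1 p.2.2.1 p.2.2.2)
    {a b c d : α → ℝ} (ha : Continuous a) (hb : Continuous b) (hc : Continuous c)
    (hd : Continuous d) :
    Continuous fun s => Q (a s) (b s) (c s) (d s) :=
  hQ.comp (ha.prodMk (hb.prodMk (hc.prodMk hd)))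

lemma cont_comp2 {α : Type*} [TopologicalSpace α] {Q : ℝ → ℝ → ℝ}
    (hQ : Continuous fun p : ℝ × ℝ => Q p.1 p.2)
    {a b : α → ℝ} (ha : Continuous a) (hb : Continuous b) :
    Continuous fun s => Q (a s) (b s) :=
  hQ.comp (ha.prodMk hb)

lemma cont_param_int {α : Type*} [TopologicalSpace α] (G : α → ℝ → ℝ)
    (hG : Continuous fun p : α × ℝ => G p.1 p.2) (c : ℝ) {e : α → ℝ} (he : Continuous e) :
    Continuous fun s => ∫ t in c..(e s), G s t :=
  intervalIntegral.continuous_parametric_intervalIntegral_of_continuous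
    (f := G) (by exact hG) he

lemma combine3 (p q r : ℝ → ℝ) (c1 c2 : ℝ) (hp : Continuous p) (hq : Continuous q)
    (hr : Continuous r) (h : ∀ t, p t + c1 * q t + c2 * r t = 0) (a b : ℝ) :
    (∫ t in a..b, p t) + c1 * (∫ t in a..b, q t) + c2 * (∫ t in a..b, r t) = 0 := by
  have iq : IntervalIntegrable (fun t => c1 * q t) volume a b :=
    (continuous_const.mul hq).intervalIntegrable _ _
  have ir : IntervalIntegrable (fun t => c2 * r t) volume a b :=
    (continuous_const.mul hr).intervalIntegrable _ _
  have e0 : (∫ t in a..b, (p t + c1 * q t + c2 * r t)) = 0 := by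
    rw [intervalIntegral.integral_congr (g := fun _ => (0:ℝ)) (fun t _ => h t)]
    simp
  have e1 : (∫ t in a..b, (p t + c1 * q t + c2 * r t))
      = (∫ t in a..b, (p t + c1 * q t)) + ∫ t in a..b, c2 * r t :=
    intervalIntegral.integral_add ((hp.intervalIntegrable _ _).add iq) ir
  have e2 : (∫ t in a..b, (p t + c1 * q t)) = (∫ t in a..b, p t) + ∫ t in a..b, c1 * q t :=
    intervalIntegral.integral_add (hp.intervalIntegrable _ _) iq
  have e3 : (∫ t in a..b, c1 * q t) = c1 * ∫ t in a..b, q t :=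
    intervalIntegral.integral_const_mul _ _
  have e4 : (∫ t in a..b, c2 * r t) = c2 * ∫ t in a..b, r t :=
    intervalIntegral.integral_const_mul _ _
  rw [e1, e2, e3, e4] at e0
  linarith

lemma combine2 (p q : ℝ → ℝ) (c1 : ℝ) (hp : Continuous p) (hq : Continuous q)
    (h : ∀ t, p t + c1 * q t = 0) (a b : ℝ) :
    (∫ t in a..b, p t) + c1 * (∫ t in a..b, q t) = 0 := by
  have := combine3 p q (fun _ => 0) c1 0 hp hq continuous_const
    (fun t => by rw [mul_zero, add_zero]; exact h t) a b
  simpa using this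

end Aux



/-- The Riemann-function representation of the solution to the inhomogeneous telegraph
equation `φ_{XY} + β₁φ_Y + β₂φ_X = u` with boundary values `φ(x,0)=χ(x)`, `φ(0,y)=ψ(y)`. -/
theorem stmt_5 (b1 b2 : ℝ) (h1 : 0 < b1) (h2 : 0 < b2) (hne : b1 ≠ b2)
    (R : ℝ → ℝ → ℝ → ℝ → ℝ) (u : ℝ → ℝ → ℝ) (χ ψ : ℝ → ℝ)
    (hRsmooth : ContDiff ℝ (⊤ : ℕ∞) (fun p : ℝ × ℝ × ℝ × ℝ => R p.1 p.2.1 p.2.2.1 p.2.2.2))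
    (hR1 : ∀ X Y x y : ℝ,
      deriv (fun X' => deriv (fun Y' => R X' Y' x y) Y) X
        + b1 * deriv (fun Y' => R X Y' x y) Y
        + b2 * deriv (fun X' => R X' Y x y) X = 0)
    (hR2 : ∀ X x y : ℝ,
      deriv (fun X' => R X' y x y) X + b1 * R X y x y = 0 ∧
      deriv (fun x' => R X y x' y) x - b1 * R X y x y = 0)
    (hR3 : ∀ Y x y : ℝ,
      deriv (fun Y' => R x Y' x y) Y + b2 * R x Y x y = 0 ∧
      deriv (fun y' => R x Y x y') y - b2 * R x Y x y = 0)
    (hR4 : ∀ x y : ℝ, R x y x y = 1)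
    (hu : ContinuousOn (fun p : ℝ × ℝ => u p.1 p.2) (Set.Ici 0 ×ˢ Set.Ici 0))
    (hχ : ContDiff ℝ 1 χ) (hψ : ContDiff ℝ 1 ψ) (h0 : χ 0 = ψ 0) :
    let φ : ℝ → ℝ → ℝ := fun X Y =>
      ψ 0 * R X Y 0 0
        + (∫ y in (0:ℝ)..Y, R X Y 0 y * (deriv ψ y + b2 * ψ y))
        + (∫ x in (0:ℝ)..X, R X Y x 0 * (deriv χ x + b1 * χ x))
        + ∫ x in (0:ℝ)..X, ∫ y in (0:ℝ)..Y, R X Y x y * u x y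
    (∀ X Y : ℝ, 0 < X → 0 < Y →
        deriv (fun X' => deriv (fun Y' => φ X' Y') Y) X
          + b1 * deriv (fun Y' => φ X Y') Y
          + b2 * deriv (fun X' => φ X' Y) X = u X Y)
      ∧ (∀ x : ℝ, 0 ≤ x → φ x 0 = χ x)
      ∧ (∀ y : ℝ, 0 ≤ y → φ 0 y = ψ y) := by
  intro φ
  -- the uncurried Riemann function and its partial derivatives
  set RU : ℝ × ℝ × ℝ × ℝ → ℝ := fun p => R p.1 p.2.1 p.2.2.1 p.2.2.2 with hRU
  have hRd : Differentiable ℝ RU := hRsmooth.differentiable (by simp)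
  set P1 : ℝ → ℝ → ℝ → ℝ → ℝ := fun a b c d => fderiv ℝ RU (a, b, c, d) (1, 0, 0, 0) with hP1def
  set P2 : ℝ → ℝ → ℝ → ℝ → ℝ := fun a b c d => fderiv ℝ RU (a, b, c, d) (0, 1, 0, 0) with hP2def
  set P3 : ℝ → ℝ → ℝ → ℝ → ℝ := fun a b c d => fderiv ℝ RU (a, b, c, d) (0, 0, 1, 0) with hP3def
  set P4 : ℝ → ℝ → ℝ → ℝ → ℝ := fun a b c d => fderiv ℝ RU (a, b, c, d) (0, 0, 0, 1) with hP4def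
  set F2 : ℝ × ℝ × ℝ × ℝ → ℝ := fun p => fderiv ℝ RU p (0, 1, 0, 0) with hF2def
  have hF2s : ContDiff ℝ (⊤ : ℕ∞) F2 := (hRsmooth.fderiv_right (by simp)).clm_apply contDiff_const
  set P12 : ℝ → ℝ → ℝ → ℝ → ℝ := fun a b c d => fderiv ℝ F2 (a, b, c, d) (1, 0, 0, 0) with hP12def
  -- continuity of everything
  have cR : Continuous fun p : ℝ × ℝ × ℝ × ℝ => R p.1 p.2.1 p.2.2.1 p.2.2.2 := hRsmooth.continuous
  have cP1 : Continuous fun p : ℝ × ℝ × ℝ × ℝ => P1 p.1 p.2.1 p.2.2.1 p.2.2.2 :=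
    (((hRsmooth.fderiv_right (by simp)).clm_apply contDiff_const :
      ContDiff ℝ (⊤ : ℕ∞) fun p => fderiv ℝ RU p ((1:ℝ), (0:ℝ), (0:ℝ), (0:ℝ)))).continuous
  have cP2 : Continuous fun p : ℝ × ℝ × ℝ × ℝ => P2 p.1 p.2.1 p.2.2.1 p.2.2.2 :=
    (((hRsmooth.fderiv_right (by simp)).clm_apply contDiff_const :
      ContDiff ℝ (⊤ : ℕ∞) fun p => fderiv ℝ RU p ((0:ℝ), (1:ℝ), (0:ℝ), (0:ℝ)))).continuous
  have cP12 : Continuous fun p : ℝ × ℝ × ℝ × ℝ => P12 p.1 p.2.1 p.2.2.1 p.2.2.2 :=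
    (((hF2s.fderiv_right (by simp)).clm_apply contDiff_const :
      ContDiff ℝ (⊤ : ℕ∞) fun p => fderiv ℝ F2 p ((1:ℝ), (0:ℝ), (0:ℝ), (0:ℝ)))).continuous
  -- slice derivatives
  have curve1 : ∀ (b c d X : ℝ), HasDerivAt (fun X' : ℝ => ((X', b, c, d) : ℝ × ℝ × ℝ × ℝ))
      ((1, 0, 0, 0) : ℝ × ℝ × ℝ × ℝ) X := fun b c d X =>
    (hasDerivAt_id X).prodMk ((hasDerivAt_const X b).prodMk
      ((hasDerivAt_const X c).prodMk (hasDerivAt_const X d)))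
  have curve2 : ∀ (a c d Y : ℝ), HasDerivAt (fun Y' : ℝ => ((a, Y', c, d) : ℝ × ℝ × ℝ × ℝ))
      ((0, 1, 0, 0) : ℝ × ℝ × ℝ × ℝ) Y := fun a c d Y =>
    (hasDerivAt_const Y a).prodMk ((hasDerivAt_id Y).prodMk
      ((hasDerivAt_const Y c).prodMk (hasDerivAt_const Y d)))
  have curve3 : ∀ (a b d x : ℝ), HasDerivAt (fun x' : ℝ => ((a, b, x', d) : ℝ × ℝ × ℝ × ℝ))
      ((0, 0, 1, 0) : ℝ × ℝ × ℝ × ℝ) x := fun a b d x =>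
    (hasDerivAt_const x a).prodMk ((hasDerivAt_const x b).prodMk
      ((hasDerivAt_id x).prodMk (hasDerivAt_const x d)))
  have curve4 : ∀ (a b c y : ℝ), HasDerivAt (fun y' : ℝ => ((a, b, c, y') : ℝ × ℝ × ℝ × ℝ))
      ((0, 0, 0, 1) : ℝ × ℝ × ℝ × ℝ) y := fun a b c y =>
    (hasDerivAt_const y a).prodMk ((hasDerivAt_const y b).prodMk
      ((hasDerivAt_const y c).prodMk (hasDerivAt_id y)))
  have hP1 : ∀ a b c d : ℝ, HasDerivAt (fun X' => R X' b c d) (P1 a b c d) a := fun a b c d =>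
    by have := (hRd (a, b, c, d)).hasFDerivAt.comp_hasDerivAt (x := a) (curve1 b c d a); exact this
  have hP2 : ∀ a b c d : ℝ, HasDerivAt (fun Y' => R a Y' c d) (P2 a b c d) b := fun a b c d =>
    by have := (hRd (a, b, c, d)).hasFDerivAt.comp_hasDerivAt (x := b) (curve2 a c d b); exact this
  have hP3 : ∀ a b c d : ℝ, HasDerivAt (fun x' => R a b x' d) (P3 a b c d) c := fun a b c d =>
    by have := (hRd (a, b, c, d)).hasFDerivAt.comp_hasDerivAt (x := c) (curve3 a b d c); exact this
  have hP4 : ∀ a b c d : ℝ, HasDerivAt (fun y' => R a b c y') (P4 a b c d) d := fun a b c d =>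
    by have := (hRd (a, b, c, d)).hasFDerivAt.comp_hasDerivAt (x := d) (curve4 a b c d); exact this
  have hP12 : ∀ a b c d : ℝ, HasDerivAt (fun X' => P2 X' b c d) (P12 a b c d) a := fun a b c d =>
    by have := ((hF2s.differentiable (by simp)) (a, b, c, d)).hasFDerivAt.comp_hasDerivAt (x := a) (curve1 b c d a); exact this
  -- translated hypotheses
  have hR2a : ∀ X x y : ℝ, P1 X y x y = -(b1 * R X y x y) := by
    intro X x y
    have h := (hR2 X x y).1
    rw [(hP1 X y x y).deriv] at h
    linarith
  have hR2b : ∀ X x y : ℝ, P3 X y x y = b1 * R X y x y := by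
    intro X x y
    have h := (hR2 X x y).2
    rw [(hP3 X y x y).deriv] at h
    linarith
  have hR3a : ∀ Y x y : ℝ, P2 x Y x y = -(b2 * R x Y x y) := by
    intro Y x y
    have h := (hR3 Y x y).1
    rw [(hP2 x Y x y).deriv] at h
    linarith
  have hR3b : ∀ Y x y : ℝ, P4 x Y x y = b2 * R x Y x y := by
    intro Y x y
    have h := (hR3 Y x y).2
    rw [(hP4 x Y x y).deriv] at h
    linarith
  have hR1' : ∀ X Y x y : ℝ, P12 X Y x y + b1 * P2 X Y x y + b2 * P1 X Y x y = 0 := by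
    intro X Y x y
    have h := hR1 X Y x y
    have e : (fun X' => deriv (fun Y' => R X' Y' x y) Y) = fun X' => P2 X' Y x y :=
      funext fun X' => (hP2 X' Y x y).deriv
    rw [e, (hP12 X Y x y).deriv, (hP2 X Y x y).deriv, (hP1 X Y x y).deriv] at h
    exact h
  -- χ ψ facts
  have hχd : ∀ t : ℝ, HasDerivAt χ (deriv χ t) t := fun t =>
    ((hχ.differentiable one_ne_zero) t).hasDerivAt
  have hψd : ∀ t : ℝ, HasDerivAt ψ (deriv ψ t) t := fun t =>
    ((hψ.differentiable one_ne_zero) t).hasDerivAt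
  have cff : Continuous fun t : ℝ => deriv χ t + b1 * χ t :=
    (hχ.continuous_deriv le_rfl).add (continuous_const.mul hχ.continuous)
  have cgg : Continuous fun t : ℝ => deriv ψ t + b2 * ψ t :=
    (hψ.continuous_deriv le_rfl).add (continuous_const.mul hψ.continuous)
  refine ⟨?_, ?_, ?_⟩
  · -- the PDE
    intro X Y hX hY
    -- continuous extension of u to the whole plane
    set v : ℝ → ℝ → ℝ := fun x y => u (max x 0) (max y 0) with hvdef
    have cv : Continuous fun p : ℝ × ℝ => v p.1 p.2 := by
      have hproj : Continuous fun p : ℝ × ℝ => ((max p.1 0, max p.2 0) : ℝ × ℝ) :=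
        (continuous_fst.max continuous_const).prodMk (continuous_snd.max continuous_const)
      exact hu.comp_continuous hproj
        (fun p => Set.mem_prod.2 ⟨Set.mem_Ici.2 (le_max_right _ _), Set.mem_Ici.2 (le_max_right _ _)⟩)
    have hvu : ∀ x y : ℝ, 0 ≤ x → 0 ≤ y → v x y = u x y := by
      intro x y hx hy
      rw [hvdef]
      simp only
      rw [max_eq_left hx, max_eq_left hy]
    set gg : ℝ → ℝ := fun t => deriv ψ t + b2 * ψ t with hggdef
    set ff : ℝ → ℝ := fun t => deriv χ t + b1 * χ t with hffdef
    -- φ agrees with the v-version on the positive quadrant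
    have hφeq : ∀ a b : ℝ, 0 ≤ a → 0 ≤ b → φ a b =
        ψ 0 * R a b 0 0 + (∫ y in (0:ℝ)..b, R a b 0 y * gg y)
          + (∫ x in (0:ℝ)..a, R a b x 0 * ff x)
          + ∫ x in (0:ℝ)..a, ∫ y in (0:ℝ)..b, R a b x y * v x y := by
      intro a b ha hb
      have hstart : φ a b = ψ 0 * R a b 0 0 + (∫ y in (0:ℝ)..b, R a b 0 y * gg y)
          + (∫ x in (0:ℝ)..a, R a b x 0 * ff x)
          + ∫ x in (0:ℝ)..a, ∫ y in (0:ℝ)..b, R a b x y * u x y := rfl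
      rw [hstart]
      congr 1
      refine intervalIntegral.integral_congr (fun x hx => ?_)
      refine intervalIntegral.integral_congr (fun y hy => ?_)
      rw [Set.uIcc_of_le ha] at hx
      rw [Set.uIcc_of_le hb] at hy
      rw [hvu x y hx.1 hy.1]
    -- ∂φ/∂Y
    have hA : ∀ Xp : ℝ, HasDerivAt (fun Y' => ψ 0 * R Xp Y' 0 0
          + (∫ y in (0:ℝ)..Y', R Xp Y' 0 y * gg y)
          + (∫ x in (0:ℝ)..Xp, R Xp Y' x 0 * ff x)
          + ∫ x in (0:ℝ)..Xp, ∫ y in (0:ℝ)..Y', R Xp Y' x y * v x y)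
        (ψ 0 * P2 Xp Y 0 0
          + (R Xp Y 0 Y * gg Y + ∫ y in (0:ℝ)..Y, P2 Xp Y 0 y * gg y)
          + (∫ x in (0:ℝ)..Xp, P2 Xp Y x 0 * ff x)
          + ∫ x in (0:ℝ)..Xp, (R Xp Y x Y * v x Y
              + ∫ y in (0:ℝ)..Y, P2 Xp Y x y * v x y)) Y := by
      intro Xp
      refine HasDerivAt.add (HasDerivAt.add (HasDerivAt.add ?_ ?_) ?_) ?_
      · exact HasDerivAt.const_mul (ψ 0) (hP2 Xp Y 0 0)
      · exact leibniz_deriv (fun a t => R Xp a 0 t * gg t) (fun a t => P2 Xp a 0 t * gg t)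
          ((cont_comp4 cR continuous_const continuous_fst continuous_const
            continuous_snd).mul (cgg.comp continuous_snd))
          ((cont_comp4 cP2 continuous_const continuous_fst continuous_const
            continuous_snd).mul (cgg.comp continuous_snd))
          (fun a t => (hP2 Xp a 0 t).mul_const (gg t)) hY
      · exact param_deriv (fun a x => R Xp a x 0 * ff x) (fun a x => P2 Xp a x 0 * ff x)
          ((cont_comp4 cR continuous_const continuous_fst continuous_snd
            continuous_const).mul (cff.comp continuous_snd))
          ((cont_comp4 cP2 continuous_const continuous_fst continuous_snd
            continuous_const).mul (cff.comp continuous_snd))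
          one_pos (fun a _ t => (hP2 Xp a t 0).mul_const (ff t))
      · refine param_deriv (fun a x => ∫ y in (0:ℝ)..a, R Xp a x y * v x y)
          (fun a x => R Xp a x a * v x a + ∫ y in (0:ℝ)..a, P2 Xp a x y * v x y)
          ?_ ?_ hY ?_
        · exact cont_param_int (fun q y => R Xp q.1 q.2 y * v q.2 y)
            ((cont_comp4 cR continuous_const (continuous_fst.comp continuous_fst)
              (continuous_snd.comp continuous_fst) continuous_snd).mul
              (cont_comp2 cv (continuous_snd.comp continuous_fst) continuous_snd))
            0 continuous_fst
        · exact ((cont_comp4 cR continuous_const continuous_fst continuous_snd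
            continuous_fst).mul (cont_comp2 cv continuous_snd continuous_fst)).add
            (cont_param_int (fun q y => P2 Xp q.1 q.2 y * v q.2 y)
              ((cont_comp4 cP2 continuous_const (continuous_fst.comp continuous_fst)
                (continuous_snd.comp continuous_fst) continuous_snd).mul
                (cont_comp2 cv (continuous_snd.comp continuous_fst) continuous_snd))
              0 continuous_fst)
        · intro a ha x
          have h0a : 0 < a := by
            have := Metric.mem_ball.1 ha
            rw [Real.dist_eq] at this
            linarith [(abs_lt.1 this).1]
          exact leibniz_deriv (fun a' t => R Xp a' x t * v x t)
            (fun a' t => P2 Xp a' x t * v x t)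
            ((cont_comp4 cR continuous_const continuous_fst continuous_const
              continuous_snd).mul (cont_comp2 cv continuous_const continuous_snd))
            ((cont_comp4 cP2 continuous_const continuous_fst continuous_const
              continuous_snd).mul (cont_comp2 cv continuous_const continuous_snd))
            (fun a' t => (hP2 Xp a' x t).mul_const (v x t)) h0a
    -- ∂φ/∂X
    have hB : HasDerivAt (fun X' => ψ 0 * R X' Y 0 0
          + (∫ y in (0:ℝ)..Y, R X' Y 0 y * gg y)
          + (∫ x in (0:ℝ)..X', R X' Y x 0 * ff x)
          + ∫ x in (0:ℝ)..X', ∫ y in (0:ℝ)..Y, R X' Y x y * v x y)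
        (ψ 0 * P1 X Y 0 0
          + (∫ y in (0:ℝ)..Y, P1 X Y 0 y * gg y)
          + (R X Y X 0 * ff X + ∫ x in (0:ℝ)..X, P1 X Y x 0 * ff x)
          + ((∫ y in (0:ℝ)..Y, R X Y X y * v X y)
              + ∫ x in (0:ℝ)..X, ∫ y in (0:ℝ)..Y, P1 X Y x y * v x y)) X := by
      refine HasDerivAt.add (HasDerivAt.add (HasDerivAt.add ?_ ?_) ?_) ?_
      · exact HasDerivAt.const_mul (ψ 0) (hP1 X Y 0 0)
      · exact param_deriv (fun a y => R a Y 0 y * gg y) (fun a y => P1 a Y 0 y * gg y)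
          ((cont_comp4 cR continuous_fst continuous_const continuous_const
            continuous_snd).mul (cgg.comp continuous_snd))
          ((cont_comp4 cP1 continuous_fst continuous_const continuous_const
            continuous_snd).mul (cgg.comp continuous_snd))
          one_pos (fun a _ t => (hP1 a Y 0 t).mul_const (gg t))
      · exact leibniz_deriv (fun a x => R a Y x 0 * ff x) (fun a x => P1 a Y x 0 * ff x)
          ((cont_comp4 cR continuous_fst continuous_const continuous_snd
            continuous_const).mul (cff.comp continuous_snd))
          ((cont_comp4 cP1 continuous_fst continuous_const continuous_snd
            continuous_const).mul (cff.comp continuous_snd))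
          (fun a t => (hP1 a Y t 0).mul_const (ff t)) hX
      · exact leibniz_deriv (fun a x => ∫ y in (0:ℝ)..Y, R a Y x y * v x y)
          (fun a x => ∫ y in (0:ℝ)..Y, P1 a Y x y * v x y)
          (cont_param_int (fun (q : ℝ × ℝ) y => R q.1 Y q.2 y * v q.2 y)
            ((cont_comp4 cR (continuous_fst.comp continuous_fst) continuous_const
              (continuous_snd.comp continuous_fst) continuous_snd).mul
              (cont_comp2 cv (continuous_snd.comp continuous_fst) continuous_snd))
            0 continuous_const)
          (cont_param_int (fun (q : ℝ × ℝ) y => P1 q.1 Y q.2 y * v q.2 y)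
            ((cont_comp4 cP1 (continuous_fst.comp continuous_fst) continuous_const
              (continuous_snd.comp continuous_fst) continuous_snd).mul
              (cont_comp2 cv (continuous_snd.comp continuous_fst) continuous_snd))
            0 continuous_const)
          (fun a x => param_deriv (fun a' y => R a' Y x y * v x y)
            (fun a' y => P1 a' Y x y * v x y)
            ((cont_comp4 cR continuous_fst continuous_const continuous_const
              continuous_snd).mul (cont_comp2 cv continuous_const continuous_snd))
            ((cont_comp4 cP1 continuous_fst continuous_const continuous_const
              continuous_snd).mul (cont_comp2 cv continuous_const continuous_snd))
            one_pos (fun a' _ t => (hP1 a' Y x t).mul_const (v x t))) hX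
    -- ∂²φ/∂X∂Y
    have hC : HasDerivAt (fun X' => ψ 0 * P2 X' Y 0 0
          + (R X' Y 0 Y * gg Y + ∫ y in (0:ℝ)..Y, P2 X' Y 0 y * gg y)
          + (∫ x in (0:ℝ)..X', P2 X' Y x 0 * ff x)
          + ∫ x in (0:ℝ)..X', (R X' Y x Y * v x Y
              + ∫ y in (0:ℝ)..Y, P2 X' Y x y * v x y))
        (ψ 0 * P12 X Y 0 0
          + (P1 X Y 0 Y * gg Y + ∫ y in (0:ℝ)..Y, P12 X Y 0 y * gg y)
          + (P2 X Y X 0 * ff X + ∫ x in (0:ℝ)..X, P12 X Y x 0 * ff x)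
          + ((R X Y X Y * v X Y + ∫ y in (0:ℝ)..Y, P2 X Y X y * v X y)
              + ∫ x in (0:ℝ)..X, (P1 X Y x Y * v x Y
                + ∫ y in (0:ℝ)..Y, P12 X Y x y * v x y))) X := by
      refine HasDerivAt.add (HasDerivAt.add (HasDerivAt.add ?_ ?_) ?_) ?_
      · exact HasDerivAt.const_mul (ψ 0) (hP12 X Y 0 0)
      · refine HasDerivAt.add ((hP1 X Y 0 Y).mul_const (gg Y)) ?_
        exact param_deriv (fun a y => P2 a Y 0 y * gg y) (fun a y => P12 a Y 0 y * gg y)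
          ((cont_comp4 cP2 continuous_fst continuous_const continuous_const
            continuous_snd).mul (cgg.comp continuous_snd))
          ((cont_comp4 cP12 continuous_fst continuous_const continuous_const
            continuous_snd).mul (cgg.comp continuous_snd))
          one_pos (fun a _ t => (hP12 a Y 0 t).mul_const (gg t))
      · exact leibniz_deriv (fun a x => P2 a Y x 0 * ff x) (fun a x => P12 a Y x 0 * ff x)
          ((cont_comp4 cP2 continuous_fst continuous_const continuous_snd
            continuous_const).mul (cff.comp continuous_snd))
          ((cont_comp4 cP12 continuous_fst continuous_const continuous_snd
            continuous_const).mul (cff.comp continuous_snd))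
          (fun a t => (hP12 a Y t 0).mul_const (ff t)) hX
      · exact leibniz_deriv
          (fun a x => R a Y x Y * v x Y + ∫ y in (0:ℝ)..Y, P2 a Y x y * v x y)
          (fun a x => P1 a Y x Y * v x Y + ∫ y in (0:ℝ)..Y, P12 a Y x y * v x y)
          (((cont_comp4 cR continuous_fst continuous_const continuous_snd
            continuous_const).mul (cont_comp2 cv continuous_snd continuous_const)).add
            (cont_param_int (fun (q : ℝ × ℝ) y => P2 q.1 Y q.2 y * v q.2 y)
              ((cont_comp4 cP2 (continuous_fst.comp continuous_fst) continuous_const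
                (continuous_snd.comp continuous_fst) continuous_snd).mul
                (cont_comp2 cv (continuous_snd.comp continuous_fst) continuous_snd))
              0 continuous_const))
          (((cont_comp4 cP1 continuous_fst continuous_const continuous_snd
            continuous_const).mul (cont_comp2 cv continuous_snd continuous_const)).add
            (cont_param_int (fun (q : ℝ × ℝ) y => P12 q.1 Y q.2 y * v q.2 y)
              ((cont_comp4 cP12 (continuous_fst.comp continuous_fst) continuous_const
                (continuous_snd.comp continuous_fst) continuous_snd).mul
                (cont_comp2 cv (continuous_snd.comp continuous_fst) continuous_snd))
              0 continuous_const))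
          (fun a x => HasDerivAt.add ((hP1 a Y x Y).mul_const (v x Y))
            (param_deriv (fun a' y => P2 a' Y x y * v x y)
              (fun a' y => P12 a' Y x y * v x y)
              ((cont_comp4 cP2 continuous_fst continuous_const continuous_const
                continuous_snd).mul (cont_comp2 cv continuous_const continuous_snd))
              ((cont_comp4 cP12 continuous_fst continuous_const continuous_const
                continuous_snd).mul (cont_comp2 cv continuous_const continuous_snd))
              one_pos (fun a' _ t => (hP12 a' Y x t).mul_const (v x t)))) hX
    -- identify the derivatives of φ
    have dA : ∀ Xp : ℝ, 0 ≤ Xp → deriv (fun Y' => φ Xp Y') Y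
        = ψ 0 * P2 Xp Y 0 0
          + (R Xp Y 0 Y * gg Y + ∫ y in (0:ℝ)..Y, P2 Xp Y 0 y * gg y)
          + (∫ x in (0:ℝ)..Xp, P2 Xp Y x 0 * ff x)
          + ∫ x in (0:ℝ)..Xp, (R Xp Y x Y * v x Y
              + ∫ y in (0:ℝ)..Y, P2 Xp Y x y * v x y) := by
      intro Xp hXp
      have hev : (fun Y' => φ Xp Y') =ᶠ[nhds Y] (fun Y' => ψ 0 * R Xp Y' 0 0
          + (∫ y in (0:ℝ)..Y', R Xp Y' 0 y * gg y)
          + (∫ x in (0:ℝ)..Xp, R Xp Y' x 0 * ff x)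
          + ∫ x in (0:ℝ)..Xp, ∫ y in (0:ℝ)..Y', R Xp Y' x y * v x y) :=
        Filter.eventuallyEq_of_mem (Ioi_mem_nhds hY)
          (fun Y' hY' => hφeq Xp Y' hXp (le_of_lt (Set.mem_Ioi.1 hY')))
      rw [hev.deriv_eq]
      exact (hA Xp).deriv
    have dB : deriv (fun X' => φ X' Y) X
        = ψ 0 * P1 X Y 0 0
          + (∫ y in (0:ℝ)..Y, P1 X Y 0 y * gg y)
          + (R X Y X 0 * ff X + ∫ x in (0:ℝ)..X, P1 X Y x 0 * ff x)
          + ((∫ y in (0:ℝ)..Y, R X Y X y * v X y)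
              + ∫ x in (0:ℝ)..X, ∫ y in (0:ℝ)..Y, P1 X Y x y * v x y) := by
      have hev : (fun X' => φ X' Y) =ᶠ[nhds X] (fun X' => ψ 0 * R X' Y 0 0
          + (∫ y in (0:ℝ)..Y, R X' Y 0 y * gg y)
          + (∫ x in (0:ℝ)..X', R X' Y x 0 * ff x)
          + ∫ x in (0:ℝ)..X', ∫ y in (0:ℝ)..Y, R X' Y x y * v x y) :=
        Filter.eventuallyEq_of_mem (Ioi_mem_nhds hX)
          (fun X' hX' => hφeq X' Y (le_of_lt (Set.mem_Ioi.1 hX')) (le_of_lt hY))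
      rw [hev.deriv_eq]
      exact hB.deriv
    have dC : deriv (fun X' => deriv (fun Y' => φ X' Y') Y) X
        = ψ 0 * P12 X Y 0 0
          + (P1 X Y 0 Y * gg Y + ∫ y in (0:ℝ)..Y, P12 X Y 0 y * gg y)
          + (P2 X Y X 0 * ff X + ∫ x in (0:ℝ)..X, P12 X Y x 0 * ff x)
          + ((R X Y X Y * v X Y + ∫ y in (0:ℝ)..Y, P2 X Y X y * v X y)
              + ∫ x in (0:ℝ)..X, (P1 X Y x Y * v x Y
                + ∫ y in (0:ℝ)..Y, P12 X Y x y * v x y)) := by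
      have hev : (fun X' => deriv (fun Y' => φ X' Y') Y) =ᶠ[nhds X]
          (fun X' => ψ 0 * P2 X' Y 0 0
            + (R X' Y 0 Y * gg Y + ∫ y in (0:ℝ)..Y, P2 X' Y 0 y * gg y)
            + (∫ x in (0:ℝ)..X', P2 X' Y x 0 * ff x)
            + ∫ x in (0:ℝ)..X', (R X' Y x Y * v x Y
                + ∫ y in (0:ℝ)..Y, P2 X' Y x y * v x y)) :=
        Filter.eventuallyEq_of_mem (Ioi_mem_nhds hX)
          (fun X' hX' => dA X' (le_of_lt (Set.mem_Ioi.1 hX')))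
      rw [hev.deriv_eq]
      exact hC.deriv
    rw [dC, dA X (le_of_lt hX), dB]
    -- the algebraic combination
    have E2 : P1 X Y 0 Y = -(b1 * R X Y 0 Y) := hR2a X 0 Y
    have E3 : (∫ y in (0:ℝ)..Y, P12 X Y 0 y * gg y)
        + b1 * (∫ y in (0:ℝ)..Y, P2 X Y 0 y * gg y)
        + b2 * (∫ y in (0:ℝ)..Y, P1 X Y 0 y * gg y) = 0 :=
      combine3 _ _ _ b1 b2
        ((cont_comp4 cP12 continuous_const continuous_const continuous_const
          continuous_id').mul cgg)
        ((cont_comp4 cP2 continuous_const continuous_const continuous_const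
          continuous_id').mul cgg)
        ((cont_comp4 cP1 continuous_const continuous_const continuous_const
          continuous_id').mul cgg)
        (fun t => by simp only [Pi.mul_apply, hggdef]; linear_combination (gg t) * hR1' X Y 0 t) 0 Y
    have E4 : P2 X Y X 0 = -(b2 * R X Y X 0) := hR3a Y X 0
    have E5 : (∫ x in (0:ℝ)..X, P12 X Y x 0 * ff x)
        + b1 * (∫ x in (0:ℝ)..X, P2 X Y x 0 * ff x)
        + b2 * (∫ x in (0:ℝ)..X, P1 X Y x 0 * ff x) = 0 :=
      combine3 _ _ _ b1 b2
        ((cont_comp4 cP12 continuous_const continuous_const continuous_id'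
          continuous_const).mul cff)
        ((cont_comp4 cP2 continuous_const continuous_const continuous_id'
          continuous_const).mul cff)
        ((cont_comp4 cP1 continuous_const continuous_const continuous_id'
          continuous_const).mul cff)
        (fun t => by simp only [Pi.mul_apply, hffdef]; linear_combination (ff t) * hR1' X Y t 0) 0 X
    have E6 : R X Y X Y = 1 := hR4 X Y
    have E6b : v X Y = u X Y := hvu X Y (le_of_lt hX) (le_of_lt hY)
    have E7 : (∫ y in (0:ℝ)..Y, P2 X Y X y * v X y)
        + b2 * (∫ y in (0:ℝ)..Y, R X Y X y * v X y) = 0 :=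
      combine2 _ _ b2
        ((cont_comp4 cP2 continuous_const continuous_const continuous_const
          continuous_id').mul (cont_comp2 cv continuous_const continuous_id'))
        ((cont_comp4 cR continuous_const continuous_const continuous_const
          continuous_id').mul (cont_comp2 cv continuous_const continuous_id'))
        (fun t => by simp only [Pi.mul_apply]; linear_combination (v X t) * hR3a Y X t) 0 Y
    have E8 : (∫ x in (0:ℝ)..X, (P1 X Y x Y * v x Y
            + ∫ y in (0:ℝ)..Y, P12 X Y x y * v x y))
        + b1 * (∫ x in (0:ℝ)..X, (R X Y x Y * v x Y
            + ∫ y in (0:ℝ)..Y, P2 X Y x y * v x y))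
        + b2 * (∫ x in (0:ℝ)..X, ∫ y in (0:ℝ)..Y, P1 X Y x y * v x y) = 0 := by
      refine combine3 _ _ _ b1 b2 ?_ ?_ ?_ (fun x => ?_) 0 X
      · exact ((cont_comp4 cP1 continuous_const continuous_const continuous_id'
          continuous_const).mul (cont_comp2 cv continuous_id' continuous_const)).add
          (cont_param_int (fun x y => P12 X Y x y * v x y)
            ((cont_comp4 cP12 continuous_const continuous_const continuous_fst
              continuous_snd).mul (cont_comp2 cv continuous_fst continuous_snd))
            0 continuous_const)
      · exact ((cont_comp4 cR continuous_const continuous_const continuous_id'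
          continuous_const).mul (cont_comp2 cv continuous_id' continuous_const)).add
          (cont_param_int (fun x y => P2 X Y x y * v x y)
            ((cont_comp4 cP2 continuous_const continuous_const continuous_fst
              continuous_snd).mul (cont_comp2 cv continuous_fst continuous_snd))
            0 continuous_const)
      · exact cont_param_int (fun x y => P1 X Y x y * v x y)
          ((cont_comp4 cP1 continuous_const continuous_const continuous_fst
            continuous_snd).mul (cont_comp2 cv continuous_fst continuous_snd))
          0 continuous_const
      · have i3 : (∫ y in (0:ℝ)..Y, P12 X Y x y * v x y)
            + b1 * (∫ y in (0:ℝ)..Y, P2 X Y x y * v x y)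
            + b2 * (∫ y in (0:ℝ)..Y, P1 X Y x y * v x y) = 0 :=
          combine3 _ _ _ b1 b2
            ((cont_comp4 cP12 continuous_const continuous_const continuous_const
              continuous_id').mul (cont_comp2 cv continuous_const continuous_id'))
            ((cont_comp4 cP2 continuous_const continuous_const continuous_const
              continuous_id').mul (cont_comp2 cv continuous_const continuous_id'))
            ((cont_comp4 cP1 continuous_const continuous_const continuous_const
              continuous_id').mul (cont_comp2 cv continuous_const continuous_id'))
            (fun t => by simp only [Pi.mul_apply]; linear_combination (v x t) * hR1' X Y x t) 0 Y
        have i2 : P1 X Y x Y = -(b1 * R X Y x Y) := hR2a X x Y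
        linear_combination i3 + (v x Y) * i2
    linear_combination E3 + E5 + E7 + E8 + (ψ 0) * (hR1' X Y 0 0) + (gg Y) * E2
      + (ff X) * E4 + (v X Y) * E6 + E6b
  · -- boundary value on Y = 0
    intro x hx
    have hz2 : (∫ x' in (0:ℝ)..x, ∫ y in (0:ℝ)..(0:ℝ), R x 0 x' y * u x' y) = 0 := by
      simp
    have hmain : (∫ t in (0:ℝ)..x, R x 0 t 0 * (deriv χ t + b1 * χ t))
        = R x 0 x 0 * χ x - R x 0 0 0 * χ 0 := by
      refine intervalIntegral.integral_eq_sub_of_hasDerivAt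
        (f := fun t => R x 0 t 0 * χ t) (fun t _ => ?_) ?_
      · have h2 := (hP3 x 0 t 0).mul (hχd t)
        have h3 : P3 x 0 t 0 = b1 * R x 0 t 0 := hR2b x t 0
        have h4 : HasDerivAt (fun t => R x 0 t 0 * χ t) (P3 x 0 t 0 * χ t + R x 0 t 0 * deriv χ t) t := h2
        exact h4.congr_deriv (by rw [h3]; ring)
      · exact ((cont_comp4 cR continuous_const continuous_const continuous_id'
          continuous_const).mul cff).intervalIntegrable _ _
    show ψ 0 * R x 0 0 0
        + (∫ y in (0:ℝ)..(0:ℝ), R x 0 0 y * (deriv ψ y + b2 * ψ y))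
        + (∫ t in (0:ℝ)..x, R x 0 t 0 * (deriv χ t + b1 * χ t))
        + (∫ x' in (0:ℝ)..x, ∫ y in (0:ℝ)..(0:ℝ), R x 0 x' y * u x' y) = χ x
    rw [intervalIntegral.integral_same, hz2, hmain, hR4 x 0]
    linear_combination (-(R x 0 0 0)) * h0
  · -- boundary value on X = 0
    intro y hy
    have hmain : (∫ t in (0:ℝ)..y, R 0 y 0 t * (deriv ψ t + b2 * ψ t))
        = R 0 y 0 y * ψ y - R 0 y 0 0 * ψ 0 := by
      refine intervalIntegral.integral_eq_sub_of_hasDerivAt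
        (f := fun t => R 0 y 0 t * ψ t) (fun t _ => ?_) ?_
      · have h2 := (hP4 0 y 0 t).mul (hψd t)
        have h3 : P4 0 y 0 t = b2 * R 0 y 0 t := hR3b y 0 t
        have h4 : HasDerivAt (fun t => R 0 y 0 t * ψ t) (P4 0 y 0 t * ψ t + R 0 y 0 t * deriv ψ t) t := h2
        exact h4.congr_deriv (by rw [h3]; ring)
      · exact ((cont_comp4 cR continuous_const continuous_const continuous_const
          continuous_id').mul cgg).intervalIntegrable _ _
    show ψ 0 * R 0 y 0 0
        + (∫ t in (0:ℝ)..y, R 0 y 0 t * (deriv ψ t + b2 * ψ t))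
        + (∫ x' in (0:ℝ)..(0:ℝ), R 0 y x' 0 * (deriv χ x' + b1 * χ x'))
        + (∫ x' in (0:ℝ)..(0:ℝ), ∫ t in (0:ℝ)..y, R 0 y x' t * u x' t) = ψ y
    rw [intervalIntegral.integral_same, intervalIntegral.integral_same, hmain, hR4 0 y]
    ring
end

section
/- Let R^d be a function on pairs of lattice points satisfying: (1) R^d(X+1,Y+1;x,y) − b₁R^d(X,Y+1;x,y) − b₂R^d(X+1,Y;x,y) + (b₁+b₂−1)R^d(X,Y;x,y) = 0; (2) R^d(X+1,Y;x,y)|_{y=Y} = b₁R^d(X,Y;x,y)|_{y=Y} and R^d(X,Y;x−1,y)|_{y=Y} = b₁R^d(X,Y;x,y)|_{y=Y}; (3) the analogous relations in the Y/y variables with b₂; (4) R^d(X,Y;X,Y) = 1; and suppose R^d depends only on the differences X−x and Y−y. Then the function Φ(X,Y) = χ(0)R^d(X,Y;0,0) + Σ_{y=1}^Y R^d(X,Y;0,y)(ψ(y)−b₂ψ(y−1)) + Σ_{x=1}^X R^d(X,Y;x,0)(χ(x)−b₁χ(x−1)) + Σ_{x=1}^X Σ_{y=1}^Y R^d(X,Y;x,y)u(x,y)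 solves the discrete telegraph equation Φ(X+1,Y+1) − b₁Φ(X,Y+1) − b₂Φ(X+1,Y) + (b₁+b₂−1)Φ(X,Y) = u(X+1,Y+1) with boundary values Φ(X,0)=χ(X), Φ(0,Y)=ψ(Y). -/
/-!
Write `Φ X Y = ∑_{x ≤ X, y ≤ Y} R^d(X,Y;x,y) g(x,y)`, where the source `g` is `u` inside the
quadrant and `χ(x) - b₁χ(x-1)`, `ψ(y) - b₂ψ(y-1)`, `χ(0)` on the axes. Applying the telegraph
operator in `(X,Y)`, relation (1) kills the terms of the common rectangle, the first relations
of (2) and (3) cancel the new row `y = Y+1` and column `x = X+1`, and by (4) only the corner term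
`g(X+1,Y+1) = u(X+1,Y+1)` survives. On the axes the boundary sums telescope by the second
relations of (2) and (3), leaving `R^d(X,0;X,0) χ(X) = χ(X)` and likewise `ψ(Y)`.
-/

open Finset

theorem sum_Icc_zero_eq_add_sum_Icc_one {M : Type*} [AddCommMonoid M] (f : ℕ → M) (n : ℕ) :
    ∑ x ∈ Icc 0 n, f x = f 0 + ∑ x ∈ Icc 1 n, f x := by
  rw [← add_sum_Ioc_eq_sum_Icc n.zero_le, ← Icc_add_one_left_eq_Ioc, zero_add]

theorem add_sum_Icc_mul_sub_mul_eq (r : ℤ → ℝ) (b : ℝ) (hr : ∀ x, r (x - 1) = b * r x)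
    (c : ℕ → ℝ) (n : ℕ) :
    r 0 * c 0 + ∑ x ∈ Icc 1 n, r x * (c x - b * c (x - 1)) = r n * c n := by
  induction n with
  | zero => simp
  | succ n ih =>
    rw [sum_Icc_succ_top (by omega), ← add_assoc, ih, Nat.add_sub_cancel]
    have step := hr (n + 1)
    rw [add_sub_cancel_right] at step
    push_cast
    linear_combination c n * step

def riemannSum (Rd : ℤ → ℤ → ℤ → ℤ → ℝ) (g : ℕ → ℕ → ℝ) (X Y : ℕ) : ℝ :=
  ∑ x ∈ Icc 0 X, ∑ y ∈ Icc 0 Y, Rd X Y x y * g x y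

theorem riemannSum_telegraph {b1 b2 : ℝ} {Rd : ℤ → ℤ → ℤ → ℤ → ℝ}
    (hR1 : ∀ X Y x y : ℤ,
      Rd (X+1) (Y+1) x y - b1 * Rd X (Y+1) x y - b2 * Rd (X+1) Y x y
        + (b1 + b2 - 1) * Rd X Y x y = 0)
    (hR2a : ∀ X Y x : ℤ, Rd (X+1) Y x Y = b1 * Rd X Y x Y)
    (hR3a : ∀ X Y y : ℤ, Rd X (Y+1) X y = b2 * Rd X Y X y)
    (hR4 : ∀ X Y : ℤ, Rd X Y X Y = 1) (g : ℕ → ℕ → ℝ) (X Y : ℕ) :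
    riemannSum Rd g (X+1) (Y+1) - b1 * riemannSum Rd g X (Y+1) - b2 * riemannSum Rd g (X+1) Y
      + (b1 + b2 - 1) * riemannSum Rd g X Y = g (X+1) (Y+1) := by
  have interior : ∑ x ∈ Icc 0 X, ∑ y ∈ Icc 0 Y, (Rd (X+1) (Y+1) x y - b1 * Rd X (Y+1) x y
      - b2 * Rd (X+1) Y x y + (b1 + b2 - 1) * Rd X Y x y) * g x y = 0 := by
    simp [hR1]
  have top_row : ∑ x ∈ Icc 0 X, (Rd (X+1) (Y+1) x (Y+1) - b1 * Rd X (Y+1) x (Y+1))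
      * g x (Y+1) = 0 := by
    simp [hR2a]
  have right_column : ∑ y ∈ Icc 0 Y, (Rd (X+1) (Y+1) (X+1) y - b2 * Rd (X+1) Y (X+1) y)
      * g (X+1) y = 0 := by
    simp [hR3a]
  simp only [sub_mul, add_mul, mul_assoc, sum_add_distrib, sum_sub_distrib, ← mul_sum]
    at interior top_row right_column
  unfold riemannSum
  simp only [sum_Icc_succ_top (Nat.zero_le _), sum_add_distrib]
  push_cast at *
  linear_combination interior + top_row + right_column + g (X+1) (Y+1) * hR4 (X+1) (Y+1)

theorem riemannSum_eq_corner_add_edges_add_interior (Rd : ℤ → ℤ → ℤ → ℤ → ℝ)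
    (g : ℕ → ℕ → ℝ) (X Y : ℕ) :
    riemannSum Rd g X Y
      = Rd X Y 0 0 * g 0 0 + ∑ y ∈ Icc 1 Y, Rd X Y 0 y * g 0 y
        + ∑ x ∈ Icc 1 X, Rd X Y x 0 * g x 0 + ∑ x ∈ Icc 1 X, ∑ y ∈ Icc 1 Y, Rd X Y x y * g x y := by
  simp only [riemannSum, sum_Icc_zero_eq_add_sum_Icc_one, sum_add_distrib, Nat.cast_zero]
  ring

def telegraphSource (b1 b2 : ℝ) (χ ψ : ℕ → ℝ) (u : ℕ → ℕ → ℝ) (x y : ℕ) : ℝ :=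
  if x = 0 then (if y = 0 then χ 0 else ψ y - b2 * ψ (y - 1))
  else if y = 0 then χ x - b1 * χ (x - 1) else u x y

theorem riemannSum_telegraphSource (Rd : ℤ → ℤ → ℤ → ℤ → ℝ) (b1 b2 : ℝ) (χ ψ : ℕ → ℝ)
    (u : ℕ → ℕ → ℝ) (X Y : ℕ) :
    riemannSum Rd (telegraphSource b1 b2 χ ψ u) X Y
      = χ 0 * Rd X Y 0 0
        + (∑ y ∈ Icc 1 Y, Rd X Y 0 y * (ψ y - b2 * ψ (y - 1)))
        + (∑ x ∈ Icc 1 X, Rd X Y x 0 * (χ x - b1 * χ (x - 1)))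
        + ∑ x ∈ Icc 1 X, ∑ y ∈ Icc 1 Y, Rd X Y x y * u x y := by
  have ne_zero {n k : ℕ} (hk : k ∈ Icc 1 n) : k ≠ 0 :=
    Nat.one_le_iff_ne_zero.mp (mem_Icc.mp hk).1
  rw [riemannSum_eq_corner_add_edges_add_interior]
  congr 1; congr 1; congr 1
  · simp [telegraphSource, mul_comm]
  · exact sum_congr rfl fun y hy => by simp [telegraphSource, ne_zero hy]
  · exact sum_congr rfl fun x hx => by simp [telegraphSource, ne_zero hx]
  · exact sum_congr rfl fun x hx => sum_congr rfl fun y hy => by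
      simp [telegraphSource, ne_zero hx, ne_zero hy]

theorem stmt_7_general (b1 b2 : ℝ)
    (Rd : ℤ → ℤ → ℤ → ℤ → ℝ)
    (hR1 : ∀ X Y x y : ℤ,
      Rd (X+1) (Y+1) x y - b1 * Rd X (Y+1) x y - b2 * Rd (X+1) Y x y
        + (b1 + b2 - 1) * Rd X Y x y = 0)
    (hR2a : ∀ X Y x : ℤ, Rd (X+1) Y x Y = b1 * Rd X Y x Y)
    (hR2b : ∀ X Y x : ℤ, Rd X Y (x-1) Y = b1 * Rd X Y x Y)
    (hR3a : ∀ X Y y : ℤ, Rd X (Y+1) X y = b2 * Rd X Y X y)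
    (hR3b : ∀ X Y y : ℤ, Rd X Y X (y-1) = b2 * Rd X Y X y)
    (hR4 : ∀ X Y : ℤ, Rd X Y X Y = 1)
    (u : ℕ → ℕ → ℝ) (χ ψ : ℕ → ℝ) (h0 : χ 0 = ψ 0)
    (Φ : ℕ → ℕ → ℝ)
    (hΦ : ∀ X Y : ℕ, Φ X Y
      = χ 0 * Rd X Y 0 0
        + (∑ y ∈ Finset.Icc 1 Y, Rd X Y 0 y * (ψ y - b2 * ψ (y - 1)))
        + (∑ x ∈ Finset.Icc 1 X, Rd X Y x 0 * (χ x - b1 * χ (x - 1)))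
        + ∑ x ∈ Finset.Icc 1 X, ∑ y ∈ Finset.Icc 1 Y, Rd X Y x y * u x y) :
    (∀ X Y : ℕ,
      Φ (X+1) (Y+1) - b1 * Φ X (Y+1) - b2 * Φ (X+1) Y + (b1 + b2 - 1) * Φ X Y
        = u (X+1) (Y+1))
    ∧ (∀ X : ℕ, Φ X 0 = χ X) ∧ (∀ Y : ℕ, Φ 0 Y = ψ Y) := by
  refine ⟨fun X Y => ?_, fun X => ?_, fun Y => ?_⟩
  · simp only [hΦ, ← riemannSum_telegraphSource]
    rw [riemannSum_telegraph hR1 hR2a hR3a hR4]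
    simp [telegraphSource]
  · have edge := add_sum_Icc_mul_sub_mul_eq (fun x => Rd X 0 x 0) b1 (hR2b X 0) χ X
    simp only [hΦ, Icc_eq_empty_of_lt zero_lt_one, sum_empty, sum_const_zero,
      add_zero, Nat.cast_zero] at edge ⊢
    rw [mul_comm, edge, hR4, one_mul]
  · have edge := add_sum_Icc_mul_sub_mul_eq (fun y => Rd 0 Y 0 y) b2 (hR3b 0 Y) ψ Y
    simp only [hΦ, Icc_eq_empty_of_lt zero_lt_one, sum_empty, add_zero,
      Nat.cast_zero] at edge ⊢
    rw [h0, mul_comm, edge, hR4, one_mul]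

/-- The discrete Riemann function representation solves the discrete telegraph equation
with the prescribed boundary values. -/
theorem stmt_7 (b1 b2 : ℝ) (hb1 : b1 ∈ Set.Ioo (0:ℝ) 1) (hb2 : b2 ∈ Set.Ioo (0:ℝ) 1)
    (hne : b1 ≠ b2)
    (Rd : ℤ → ℤ → ℤ → ℤ → ℝ)
    (hdiff : ∀ X Y x y : ℤ, Rd X Y x y = Rd (X - x) (Y - y) 0 0)
    (hR1 : ∀ X Y x y : ℤ,
      Rd (X+1) (Y+1) x y - b1 * Rd X (Y+1) x y - b2 * Rd (X+1) Y x y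
        + (b1 + b2 - 1) * Rd X Y x y = 0)
    (hR2a : ∀ X Y x : ℤ, Rd (X+1) Y x Y = b1 * Rd X Y x Y)
    (hR2b : ∀ X Y x : ℤ, Rd X Y (x-1) Y = b1 * Rd X Y x Y)
    (hR3a : ∀ X Y y : ℤ, Rd X (Y+1) X y = b2 * Rd X Y X y)
    (hR3b : ∀ X Y y : ℤ, Rd X Y X (y-1) = b2 * Rd X Y X y)
    (hR4 : ∀ X Y : ℤ, Rd X Y X Y = 1)
    (u : ℕ → ℕ → ℝ) (χ ψ : ℕ → ℝ) (h0 : χ 0 = ψ 0)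
    (Φ : ℕ → ℕ → ℝ)
    (hΦ : ∀ X Y : ℕ, Φ X Y
      = χ 0 * Rd X Y 0 0
        + (∑ y ∈ Finset.Icc 1 Y, Rd X Y 0 y * (ψ y - b2 * ψ (y - 1)))
        + (∑ x ∈ Finset.Icc 1 X, Rd X Y x 0 * (χ x - b1 * χ (x - 1)))
        + ∑ x ∈ Finset.Icc 1 X, ∑ y ∈ Finset.Icc 1 Y, Rd X Y x y * u x y) :
    (∀ X Y : ℕ,
      Φ (X+1) (Y+1) - b1 * Φ X (Y+1) - b2 * Φ (X+1) Y + (b1 + b2 - 1) * Φ X Y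
        = u (X+1) (Y+1))
    ∧ (∀ X : ℕ, Φ X 0 = χ X) ∧ (∀ Y : ℕ, Φ 0 Y = ψ Y) :=
  stmt_7_general b1 b2 Rd hR1 hR2a hR2b hR3a hR3b hR4 u χ ψ h0 Φ hΦ
end

section
/- Let ξ: ℤ²_{≥1} → ℝ satisfy the four-point relation ξ(x+1,y+1) = F(x+1,y+1) − b·F(x,y+1) − bq·F(x+1,y) + (b+bq−1)F(x,y) for a function F: ℤ²_{≥0} → ℝ. Then for all X,Y ≥ 1: −(1−b)Σ_{x=1}^{X−1}F(x,0) − (1−bq)Σ_{y=1}^{Y−1}F(0,y) + (1−b)Σ_{x=1}^{X−1}F(x,Y) + (1−bq)Σ_{y=1}^{Y−1}F(X,y) + (b+bq−1)F(0,0) − bq·F(X,0) − b·F(0,Y) + F(X,Y) = Σ_{x=1}^{X}Σ_{y=1}^{Y}ξ(x,y). -/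
/-!
Write the four-point relation as a mixed second difference of `F` plus `(1 - b)` times a
difference in `y` and `(1 - b q)` times a difference in `x`. Summed over a rectangle, the mixed
difference telescopes to the four corner values and each first difference telescopes in its own
direction to a boundary sum; splitting off the corner terms of these boundary sums gives the
identity.
-/

open Finset

section FourPoint

variable {R : Type*} [CommRing R]

theorem sum_range_sum_range_mixed_sub (F : ℕ → ℕ → R) (m n : ℕ) :
    ∑ i ∈ range m, ∑ j ∈ range n, (F (i + 1) (j + 1) - F i (j + 1) - F (i + 1) j + F i j)
      = F m n - F 0 n - F m 0 + F 0 0 := by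
  have hrow (i : ℕ) :
      ∑ j ∈ range n, (F (i + 1) (j + 1) - F i (j + 1) - F (i + 1) j + F i j)
        = (F (i + 1) n - F (i + 1) 0) - (F i n - F i 0) := by
    calc _ = ∑ j ∈ range n, ((F (i + 1) (j + 1) - F i (j + 1)) - (F (i + 1) j - F i j)) :=
          sum_congr rfl fun j _ ↦ by ring
      _ = _ := by rw [sum_range_sub (fun j ↦ F (i + 1) j - F i j)]; ring
  rw [sum_congr rfl fun i _ ↦ hrow i, sum_range_sub (fun i ↦ F i n - F i 0)]
  ring

theorem sum_range_sum_range_of_four_point (α β : R) (F ξ : ℕ → ℕ → R)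
    (hξ : ∀ x y, ξ (x + 1) (y + 1) = F (x + 1) (y + 1) - α * F x (y + 1) - β * F (x + 1) y
      + (α + β - 1) * F x y) (m n : ℕ) :
    ∑ i ∈ range m, ∑ j ∈ range n, ξ (i + 1) (j + 1)
      = (F m n - F 0 n - F m 0 + F 0 0) + (1 - α) * ∑ i ∈ range m, (F i n - F i 0)
        + (1 - β) * ∑ j ∈ range n, (F m j - F 0 j) := by
  have hsplit (i j : ℕ) : ξ (i + 1) (j + 1)
      = (F (i + 1) (j + 1) - F i (j + 1) - F (i + 1) j + F i j)
        + (1 - α) * (F i (j + 1) - F i j) + (1 - β) * (F (i + 1) j - F i j) := by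
    rw [hξ]; ring
  calc ∑ i ∈ range m, ∑ j ∈ range n, ξ (i + 1) (j + 1)
      = ∑ i ∈ range m, ∑ j ∈ range n, (F (i + 1) (j + 1) - F i (j + 1) - F (i + 1) j + F i j)
        + (1 - α) * ∑ i ∈ range m, ∑ j ∈ range n, (F i (j + 1) - F i j)
        + (1 - β) * ∑ j ∈ range n, ∑ i ∈ range m, (F (i + 1) j - F i j) := by
        rw [sum_comm (s := range n)]
        simp only [hsplit, sum_add_distrib, mul_sum]
    _ = _ := by
        simp only [sum_range_sum_range_mixed_sub, sum_range_sub, fun j ↦ sum_range_sub (F · j) m]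

end FourPoint

theorem sum_Icc_one_eq_sum_range {M : Type*} [AddCommMonoid M] (f : ℕ → M) (n : ℕ) :
    ∑ i ∈ Icc 1 n, f i = ∑ i ∈ range n, f (i + 1) := by
  rw [range_eq_Ico, sum_Ico_add' f 0 n 1, zero_add, Ico_add_one_right_eq_Icc]

/-- Integrated form of the four-point relation (Corollary 3.3 of Borodin–Gorin):
summing the relation over the rectangle `[0,X−1] × [0,Y−1]` and collecting
boundary terms. Here `F(x,y)` plays the role of `q^{H(x,y)}`. -/
theorem stmt_16 (b q : ℝ) (F : ℕ → ℕ → ℝ) (ξ : ℕ → ℕ → ℝ)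
    (hξ : ∀ x y : ℕ,
      ξ (x+1) (y+1) = F (x+1) (y+1) - b * F x (y+1) - b * q * F (x+1) y
        + (b + b * q - 1) * F x y) :
    ∀ X Y : ℕ, 1 ≤ X → 1 ≤ Y →
      -(1 - b) * (∑ x ∈ Finset.Icc 1 (X - 1), F x 0)
        - (1 - b * q) * (∑ y ∈ Finset.Icc 1 (Y - 1), F 0 y)
        + (1 - b) * (∑ x ∈ Finset.Icc 1 (X - 1), F x Y)
        + (1 - b * q) * (∑ y ∈ Finset.Icc 1 (Y - 1), F X y)
        + (b + b * q - 1) * F 0 0 - b * q * F X 0 - b * F 0 Y + F X Y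
      = ∑ x ∈ Finset.Icc 1 X, ∑ y ∈ Finset.Icc 1 Y, ξ x y := by
  intro X Y hX hY
  obtain ⟨m, rfl⟩ := Nat.exists_eq_add_of_le' hX
  obtain ⟨n, rfl⟩ := Nat.exists_eq_add_of_le' hY
  simp only [Nat.add_sub_cancel, sum_Icc_one_eq_sum_range]
  rw [sum_range_sum_range_of_four_point b (b * q) F ξ hξ, sum_range_succ' _ m,
    sum_range_succ' (fun j ↦ F (m + 1) j - F 0 j), sum_sub_distrib, sum_sub_distrib]
  ring
end
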